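/- arXiv:1212.5826 — 4 statements merged into one kernel-verified Lean document; each statement's English description precedes it below -/
import Mathlib

section
/- Let $t_0 < t_1$, let $\alpha, \beta : [t_0,t_1] \to \mathbb{R}$ be continuous, let $a \in \mathbb{R}$ and $H > 0$, and let $G$ be the Green function defined by $G(t,s) = \frac{(t - t_0)(t_1 - s)}{t_1 - t_0}$ if $t \le s$ and $G(t,s) = \frac{(s - t_0)(t_1 - t)}{t_1 - t_0}$ if $s \le t$. Define the operator $S$ on the space $C^1([t_0,t_1],\mathbb{R})$ by $Sz(t) = -\int_{t_0}^{t_1} G(t,s)\big[\alpha(s)(\dot z(s) + a)^2 \exp\big(-\frac{z(s)}{H}\big) + \beta(s)\big] ds$. Then $S$ maps $C^1([t_0,t_1],\mathbb{R})$ into itself and is continuous with respect to the norm $\|z\| = \max\{\sup_{t}|z(t)|, \sup_{t}|\dot z(t)|\}$. -/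
open Set

/-- The Green function of `z ↦ -z̈` on `[t₀, t₁]` with homogeneous Dirichlet
boundary conditions. -/
noncomputable def Green (t0 t1 t s : ℝ) : ℝ :=
  if t ≤ s then (t - t0) * (t1 - s) / (t1 - t0) else (s - t0) * (t1 - t) / (t1 - t0)

/-- `z` is continuously differentiable on the set `s` (with derivative `derivWithin z s`). -/
def IsC1On (z : ℝ → ℝ) (s : Set ℝ) : Prop :=
  (∀ t ∈ s, HasDerivWithinAt z (derivWithin z s t) s t) ∧
    ContinuousOn (derivWithin z s) s

lemma green_cont_s (t0 t1 t : ℝ) : Continuous (fun s => Green t0 t1 t s) := by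
  unfold Green
  exact Continuous.if_le (by fun_prop) (by fun_prop) continuous_const continuous_id
    (fun s hs => by rw [← hs])

lemma green_bound {t0 t1 t s : ℝ} (ht : t0 < t1) (htm : t ∈ Icc t0 t1) (hsm : s ∈ Icc t0 t1) :
    |Green t0 t1 t s| ≤ t1 - t0 := by
  obtain ⟨h1, h2⟩ := htm; obtain ⟨h3, h4⟩ := hsm
  unfold Green
  split <;>
  · rw [abs_div, abs_of_pos (by linarith : (0:ℝ) < t1 - t0),
      abs_of_nonneg (by nlinarith : (0:ℝ) ≤ _), div_le_iff₀ (by linarith)]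
    nlinarith
open intervalIntegral in
lemma greenInt_eq {t0 t1 : ℝ} (ht : t0 < t1) {f : ℝ → ℝ} (hf : ContinuousOn f (Icc t0 t1))
    {t : ℝ} (htm : t ∈ Icc t0 t1) :
    ∫ s in t0..t1, Green t0 t1 t s * f s =
      ((t1 - t) / (t1 - t0)) * (∫ s in t0..t, (s - t0) * f s) +
        ((t - t0) / (t1 - t0)) * (∫ s in t..t1, (t1 - s) * f s) := by
  obtain ⟨h0, h1⟩ := htm
  have hsub1 : uIcc t0 t ⊆ Icc t0 t1 := by
    rw [uIcc_of_le h0]; exact Icc_subset_Icc le_rfl h1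
  have hsub2 : uIcc t t1 ⊆ Icc t0 t1 := by
    rw [uIcc_of_le h1]; exact Icc_subset_Icc h0 le_rfl
  have hg : Continuous (fun s => Green t0 t1 t s) := green_cont_s t0 t1 t
  have hInt1 : IntervalIntegrable (fun s => Green t0 t1 t s * f s) MeasureTheory.volume t0 t :=
    ((hg.continuousOn).mul (hf.mono hsub1)).intervalIntegrable
  have hInt2 : IntervalIntegrable (fun s => Green t0 t1 t s * f s) MeasureTheory.volume t t1 :=
    ((hg.continuousOn).mul (hf.mono hsub2)).intervalIntegrable
  have hsplit := integral_add_adjacent_intervals hInt1 hInt2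
  rw [← hsplit]
  have e1 : ∫ s in t0..t, Green t0 t1 t s * f s
      = ∫ s in t0..t, ((t1 - t) / (t1 - t0)) * ((s - t0) * f s) := by
    apply integral_congr
    intro s hs
    rw [uIcc_of_le h0] at hs
    by_cases hts : t ≤ s
    · have : s = t := le_antisymm hs.2 hts
      subst this
      simp only [Green, if_pos hts]; ring
    · simp only [Green, if_neg hts]; ring
  have e2 : ∫ s in t..t1, Green t0 t1 t s * f s
      = ∫ s in t..t1, ((t - t0) / (t1 - t0)) * ((t1 - s) * f s) := by
    apply integral_congr
    intro s hs
    rw [uIcc_of_le h1] at hs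
    by_cases hts : t ≤ s
    · simp only [Green, if_pos hts]; ring
    · have : s = t := le_antisymm (not_le.mp hts).le hs.1
      subst this
      simp only [Green, if_neg hts]; ring
  rw [e1, e2, integral_const_mul, integral_const_mul]
open intervalIntegral MeasureTheory in
lemma green_hasDeriv {t0 t1 : ℝ} (ht : t0 < t1) {f : ℝ → ℝ} (hf : ContinuousOn f (Icc t0 t1))
    {t : ℝ} (htm : t ∈ Icc t0 t1) :
    HasDerivWithinAt (fun u => -∫ s in t0..t1, Green t0 t1 u s * f s)
      (((∫ s in t0..t, (s - t0) * f s) - ∫ s in t..t1, (t1 - s) * f s) / (t1 - t0))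
      (Icc t0 t1) t := by
  haveI : Fact (t ∈ Icc t0 t1) := ⟨htm⟩
  have h0 := htm.1
  have h1 := htm.2
  have hsub1 : uIcc t0 t ⊆ Icc t0 t1 := by
    rw [uIcc_of_le h0]; exact Icc_subset_Icc le_rfl h1
  have hsub2 : uIcc t t1 ⊆ Icc t0 t1 := by
    rw [uIcc_of_le h1]; exact Icc_subset_Icc h0 le_rfl
  have hc1 : ContinuousOn (fun s => (s - t0) * f s) (Icc t0 t1) :=
    (continuousOn_id.sub continuousOn_const).mul hf
  have hc2 : ContinuousOn (fun s => (t1 - s) * f s) (Icc t0 t1) :=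
    (continuousOn_const.sub continuousOn_id).mul hf
  have hi1 : IntervalIntegrable (fun s => (s - t0) * f s) volume t0 t :=
    (hc1.mono hsub1).intervalIntegrable
  have hi2 : IntervalIntegrable (fun s => (t1 - s) * f s) volume t t1 :=
    (hc2.mono hsub2).intervalIntegrable
  have hA : HasDerivWithinAt (fun u => ∫ s in t0..u, (s - t0) * f s)
      ((t - t0) * f t) (Icc t0 t1) t :=
    integral_hasDerivWithinAt_right hi1
      (hc1.stronglyMeasurableAtFilter_nhdsWithin measurableSet_Icc t) (hc1 t htm)
  have hB : HasDerivWithinAt (fun u => ∫ s in u..t1, (t1 - s) * f s)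
      (-((t1 - t) * f t)) (Icc t0 t1) t :=
    integral_hasDerivWithinAt_left hi2
      (hc2.stronglyMeasurableAtFilter_nhdsWithin measurableSet_Icc t) (hc2 t htm)
  have hL : HasDerivWithinAt (fun u : ℝ => t1 - u) (-1) (Icc t0 t1) t := by
    simpa using (hasDerivWithinAt_id t (Icc t0 t1)).const_sub t1
  have hR : HasDerivWithinAt (fun u : ℝ => u - t0) 1 (Icc t0 t1) t :=
    (hasDerivWithinAt_id t (Icc t0 t1)).sub_const t0
  have hsum := (((hL.mul hA).add (hR.mul hB)).div_const (t1 - t0)).neg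
  have key : ∀ u ∈ Icc t0 t1, (-∫ s in t0..t1, Green t0 t1 u s * f s) =
      -((((t1 - u) * ∫ s in t0..u, (s - t0) * f s) +
          (u - t0) * ∫ s in u..t1, (t1 - s) * f s) / (t1 - t0)) := by
    intro u hu
    rw [greenInt_eq ht hf hu]; ring
  have final := hsum.congr key (key t htm)
  refine final.congr_deriv ?_
  ring
open intervalIntegral MeasureTheory in
lemma green_isC1 {t0 t1 : ℝ} (ht : t0 < t1) {f : ℝ → ℝ} (hf : ContinuousOn f (Icc t0 t1)) :
    IsC1On (fun u => -∫ s in t0..t1, Green t0 t1 u s * f s) (Icc t0 t1) ∧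
    ∀ t ∈ Icc t0 t1, derivWithin (fun u => -∫ s in t0..t1, Green t0 t1 u s * f s) (Icc t0 t1) t =
      ((∫ s in t0..t, (s - t0) * f s) - ∫ s in t..t1, (t1 - s) * f s) / (t1 - t0) := by
  have hdw : ∀ t ∈ Icc t0 t1,
      derivWithin (fun u => -∫ s in t0..t1, Green t0 t1 u s * f s) (Icc t0 t1) t =
        ((∫ s in t0..t, (s - t0) * f s) - ∫ s in t..t1, (t1 - s) * f s) / (t1 - t0) :=
    fun t htm => (green_hasDeriv ht hf htm).derivWithin (uniqueDiffOn_Icc ht t htm)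
  have hc1 : ContinuousOn (fun s => (s - t0) * f s) (Icc t0 t1) :=
    (continuousOn_id.sub continuousOn_const).mul hf
  have hc2 : ContinuousOn (fun s => (t1 - s) * f s) (Icc t0 t1) :=
    (continuousOn_const.sub continuousOn_id).mul hf
  have huIcc : uIcc t0 t1 = Icc t0 t1 := uIcc_of_le ht.le
  have hcA : ContinuousOn (fun t => ∫ s in t0..t, (s - t0) * f s) (Icc t0 t1) := by
    rw [← huIcc]
    exact continuousOn_primitive_interval (huIcc ▸ hc1.integrableOn_compact isCompact_Icc)
  have hcB : ContinuousOn (fun t => ∫ s in t..t1, (t1 - s) * f s) (Icc t0 t1) := by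
    rw [← huIcc]
    exact continuousOn_primitive_interval_left (huIcc ▸ hc2.integrableOn_compact isCompact_Icc)
  refine ⟨⟨fun t htm => ?_, ?_⟩, hdw⟩
  · rw [hdw t htm]
    exact green_hasDeriv ht hf htm
  · exact ContinuousOn.congr ((hcA.sub hcB).div_const (t1 - t0)) hdw
lemma nonlin_est {H M Ma a δ : ℝ} (hH : 0 < H) (hM : 0 ≤ M) (hMa : 0 ≤ Ma)
    (hδ0 : 0 ≤ δ) (hδ1 : δ ≤ 1) (hδH : δ ≤ H)
    {A P Q Z W : ℝ} (hA : |A| ≤ Ma) (hP : |P| ≤ M) (hZ : |Z| ≤ M)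
    (hQP : |Q - P| ≤ δ) (hWZ : |W - Z| ≤ δ) :
    |A * (Q + a) ^ 2 * Real.exp (-W / H) - A * (P + a) ^ 2 * Real.exp (-Z / H)|
      ≤ δ * (Ma * Real.exp ((M + H) / H) *
          ((2 * M + 2 * |a| + 1) + 2 * (M + |a|) ^ 2 / H)) := by
  set E := Real.exp ((M + H) / H) with hE
  have hWb : |W| ≤ M + δ := by
    calc |W| = |Z + (W - Z)| := by ring_nf
    _ ≤ |Z| + |W - Z| := abs_add_le _ _
    _ ≤ M + δ := add_le_add hZ hWZ
  have hEv : Real.exp (-W / H) ≤ E := by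
    apply Real.exp_le_exp.mpr
    have := (abs_le.mp hWb).1
    gcongr
    linarith
  have hEu : Real.exp (-Z / H) ≤ E := by
    apply Real.exp_le_exp.mpr
    have := (abs_le.mp hZ).1
    gcongr
    linarith
  have hQb : |Q + P + 2 * a| ≤ 2 * M + 2 * |a| + 1 := by
    have hQ : |Q| ≤ M + δ := by
      calc |Q| = |P + (Q - P)| := by ring_nf
      _ ≤ |P| + |Q - P| := abs_add_le _ _
      _ ≤ M + δ := add_le_add hP hQP
    calc |Q + P + 2 * a| ≤ |Q + P| + |2 * a| := abs_add_le _ _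
    _ ≤ |Q| + |P| + 2 * |a| := by
        rw [abs_mul, abs_two]; exact add_le_add_left (abs_add_le _ _) _
    _ ≤ 2 * M + 2 * |a| + 1 := by linarith
  have hsq : |(Q + a) ^ 2 - (P + a) ^ 2| ≤ δ * (2 * M + 2 * |a| + 1) := by
    have h : (Q + a) ^ 2 - (P + a) ^ 2 = (Q - P) * (Q + P + 2 * a) := by ring
    rw [h, abs_mul]
    exact mul_le_mul hQP hQb (abs_nonneg _) hδ0
  have hP2 : (P + a) ^ 2 ≤ (M + |a|) ^ 2 := by
    have h1 : |P + a| ≤ M + |a| := (abs_add_le _ _).trans (add_le_add hP le_rfl)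
    calc (P + a) ^ 2 = |P + a| ^ 2 := (sq_abs _).symm
    _ ≤ (M + |a|) ^ 2 := by
        apply pow_le_pow_left₀ (abs_nonneg _) h1
  have hvu : |(-W / H) - (-Z / H)| ≤ δ / H := by
    have h : (-W / H) - (-Z / H) = -(W - Z) / H := by ring
    rw [h, abs_div, abs_neg, abs_of_pos hH]
    exact div_le_div_of_nonneg_right hWZ hH.le
  have hvu1 : |(-W / H) - (-Z / H)| ≤ 1 := hvu.trans (by
    rw [div_le_one hH]; exact hδH)
  have hexp : |Real.exp (-W / H) - Real.exp (-Z / H)| ≤ E * (2 * (δ / H)) := by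
    have h : Real.exp (-W / H) - Real.exp (-Z / H) =
        Real.exp (-Z / H) * (Real.exp ((-W / H) - (-Z / H)) - 1) := by
      rw [mul_sub, mul_one, ← Real.exp_add]
      congr 1
      ring
    rw [h, abs_mul, Real.abs_exp]
    calc Real.exp (-Z / H) * |Real.exp ((-W / H) - (-Z / H)) - 1|
        ≤ E * (2 * |(-W / H) - (-Z / H)|) := by
          apply mul_le_mul hEu (Real.abs_exp_sub_one_le hvu1) (abs_nonneg _)
            (Real.exp_pos _).le
    _ ≤ E * (2 * (δ / H)) := by
          apply mul_le_mul_of_nonneg_left (by linarith) (Real.exp_pos _).le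
  have hkey : (Q + a) ^ 2 * Real.exp (-W / H) - (P + a) ^ 2 * Real.exp (-Z / H) =
      ((Q + a) ^ 2 - (P + a) ^ 2) * Real.exp (-W / H) +
        (P + a) ^ 2 * (Real.exp (-W / H) - Real.exp (-Z / H)) := by ring
  have hinner : |(Q + a) ^ 2 * Real.exp (-W / H) - (P + a) ^ 2 * Real.exp (-Z / H)|
      ≤ δ * (2 * M + 2 * |a| + 1) * E + (M + |a|) ^ 2 * (E * (2 * (δ / H))) := by
    rw [hkey]
    calc _ ≤ |((Q + a) ^ 2 - (P + a) ^ 2) * Real.exp (-W / H)| +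
        |(P + a) ^ 2 * (Real.exp (-W / H) - Real.exp (-Z / H))| := abs_add_le _ _
    _ ≤ δ * (2 * M + 2 * |a| + 1) * E + (M + |a|) ^ 2 * (E * (2 * (δ / H))) := by
        apply add_le_add
        · rw [abs_mul, Real.abs_exp]
          exact mul_le_mul hsq hEv (Real.exp_pos _).le (by positivity)
        · rw [abs_mul, abs_of_nonneg (sq_nonneg (P + a))]
          exact mul_le_mul hP2 hexp (abs_nonneg _) (by positivity)
  have hfactor : A * (Q + a) ^ 2 * Real.exp (-W / H) - A * (P + a) ^ 2 * Real.exp (-Z / H) =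
      A * ((Q + a) ^ 2 * Real.exp (-W / H) - (P + a) ^ 2 * Real.exp (-Z / H)) := by ring
  rw [hfactor, abs_mul]
  calc |A| * |(Q + a) ^ 2 * Real.exp (-W / H) - (P + a) ^ 2 * Real.exp (-Z / H)|
      ≤ Ma * (δ * (2 * M + 2 * |a| + 1) * E + (M + |a|) ^ 2 * (E * (2 * (δ / H)))) :=
        mul_le_mul hA hinner (abs_nonneg _) hMa
  _ = δ * (Ma * E * ((2 * M + 2 * |a| + 1) + 2 * (M + |a|) ^ 2 / H)) := by ring
open intervalIntegral MeasureTheory in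
lemma green_diff_bounds {t0 t1 : ℝ} (ht : t0 < t1) {f g : ℝ → ℝ}
    (hf : ContinuousOn f (Icc t0 t1)) (hg : ContinuousOn g (Icc t0 t1))
    {C : ℝ} (hC : 0 ≤ C) (hfg : ∀ s ∈ Icc t0 t1, |f s - g s| ≤ C)
    {t : ℝ} (htm : t ∈ Icc t0 t1) :
    |(-∫ s in t0..t1, Green t0 t1 t s * f s) - (-∫ s in t0..t1, Green t0 t1 t s * g s)|
        ≤ (t1 - t0) ^ 2 * C ∧
    |derivWithin (fun u => -∫ s in t0..t1, Green t0 t1 u s * f s) (Icc t0 t1) t -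
        derivWithin (fun u => -∫ s in t0..t1, Green t0 t1 u s * g s) (Icc t0 t1) t|
      ≤ 2 * (t1 - t0) * C := by
  have h10 : 0 < t1 - t0 := sub_pos.mpr ht
  have h0 := htm.1
  have h1 := htm.2
  have hsub : uIcc t0 t1 ⊆ Icc t0 t1 := by rw [uIcc_of_le ht.le]
  have hsub1 : uIcc t0 t ⊆ Icc t0 t1 := by
    rw [uIcc_of_le h0]; exact Icc_subset_Icc le_rfl h1
  have hsub2 : uIcc t t1 ⊆ Icc t0 t1 := by
    rw [uIcc_of_le h1]; exact Icc_subset_Icc h0 le_rfl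
  have hGc := green_cont_s t0 t1 t
  have hif : IntervalIntegrable (fun s => Green t0 t1 t s * f s) volume t0 t1 :=
    ((hGc.continuousOn.mul hf).mono hsub).intervalIntegrable
  have hig : IntervalIntegrable (fun s => Green t0 t1 t s * g s) volume t0 t1 :=
    ((hGc.continuousOn.mul hg).mono hsub).intervalIntegrable
  constructor
  · have heq : (-∫ s in t0..t1, Green t0 t1 t s * f s) -
        (-∫ s in t0..t1, Green t0 t1 t s * g s) =
        -∫ s in t0..t1, (Green t0 t1 t s * f s - Green t0 t1 t s * g s) := by
      rw [integral_sub hif hig]; ring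
    rw [heq, abs_neg]
    have hb : ‖∫ s in t0..t1, (Green t0 t1 t s * f s - Green t0 t1 t s * g s)‖
        ≤ (t1 - t0) * C * |t1 - t0| := by
      apply intervalIntegral.norm_integral_le_of_norm_le_const
      intro s hs
      have hsm : s ∈ Icc t0 t1 := by
        rw [uIoc_of_le ht.le] at hs; exact Ioc_subset_Icc_self hs
      rw [Real.norm_eq_abs, ← mul_sub, abs_mul]
      exact mul_le_mul (green_bound ht htm hsm) (hfg s hsm) (abs_nonneg _) h10.le
    rw [Real.norm_eq_abs] at hb
    calc |∫ s in t0..t1, (Green t0 t1 t s * f s - Green t0 t1 t s * g s)|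
        ≤ (t1 - t0) * C * |t1 - t0| := hb
    _ = (t1 - t0) ^ 2 * C := by rw [abs_of_pos h10]; ring
  · rw [(green_isC1 ht hf).2 t htm, (green_isC1 ht hg).2 t htm]
    have hiAf : IntervalIntegrable (fun s => (s - t0) * f s) volume t0 t :=
      (((continuousOn_id.sub continuousOn_const).mul hf).mono hsub1).intervalIntegrable
    have hiAg : IntervalIntegrable (fun s => (s - t0) * g s) volume t0 t :=
      (((continuousOn_id.sub continuousOn_const).mul hg).mono hsub1).intervalIntegrable
    have hiBf : IntervalIntegrable (fun s => (t1 - s) * f s) volume t t1 :=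
      (((continuousOn_const.sub continuousOn_id).mul hf).mono hsub2).intervalIntegrable
    have hiBg : IntervalIntegrable (fun s => (t1 - s) * g s) volume t t1 :=
      (((continuousOn_const.sub continuousOn_id).mul hg).mono hsub2).intervalIntegrable
    have hA : |(∫ s in t0..t, (s - t0) * f s) - ∫ s in t0..t, (s - t0) * g s|
        ≤ (t1 - t0) * C * (t1 - t0) := by
      rw [← integral_sub hiAf hiAg]
      have hb : ‖∫ s in t0..t, ((s - t0) * f s - (s - t0) * g s)‖
          ≤ (t1 - t0) * C * |t - t0| := by
        apply intervalIntegral.norm_integral_le_of_norm_le_const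
        intro s hs
        have hsm : s ∈ Icc t0 t1 := by
          rw [uIoc_of_le h0] at hs
          exact ⟨hs.1.le, hs.2.trans h1⟩
        rw [Real.norm_eq_abs, ← mul_sub, abs_mul]
        apply mul_le_mul ?_ (hfg s hsm) (abs_nonneg _) h10.le
        rw [abs_of_nonneg (by linarith [hsm.1] : (0:ℝ) ≤ s - t0)]
        linarith [hsm.2]
      rw [Real.norm_eq_abs] at hb
      refine hb.trans ?_
      have : |t - t0| ≤ t1 - t0 := by
        rw [abs_of_nonneg (by linarith : (0:ℝ) ≤ t - t0)]; linarith
      nlinarith [mul_nonneg h10.le hC]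
    have hB : |(∫ s in t..t1, (t1 - s) * f s) - ∫ s in t..t1, (t1 - s) * g s|
        ≤ (t1 - t0) * C * (t1 - t0) := by
      rw [← integral_sub hiBf hiBg]
      have hb : ‖∫ s in t..t1, ((t1 - s) * f s - (t1 - s) * g s)‖
          ≤ (t1 - t0) * C * |t1 - t| := by
        apply intervalIntegral.norm_integral_le_of_norm_le_const
        intro s hs
        have hsm : s ∈ Icc t0 t1 := by
          rw [uIoc_of_le h1] at hs
          exact ⟨h0.trans hs.1.le, hs.2⟩
        rw [Real.norm_eq_abs, ← mul_sub, abs_mul]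
        apply mul_le_mul ?_ (hfg s hsm) (abs_nonneg _) h10.le
        rw [abs_of_nonneg (by linarith [hsm.2] : (0:ℝ) ≤ t1 - s)]
        linarith [hsm.1]
      rw [Real.norm_eq_abs] at hb
      refine hb.trans ?_
      have : |t1 - t| ≤ t1 - t0 := by
        rw [abs_of_nonneg (by linarith : (0:ℝ) ≤ t1 - t)]; linarith
      nlinarith [mul_nonneg h10.le hC]
    have hkey : |((∫ s in t0..t, (s - t0) * f s) - ∫ s in t0..t, (s - t0) * g s) -
        ((∫ s in t..t1, (t1 - s) * f s) - ∫ s in t..t1, (t1 - s) * g s)|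
        ≤ 2 * ((t1 - t0) * C * (t1 - t0)) := by
      rw [abs_le]
      constructor <;> [skip; skip] <;>
        · have h2 := abs_le.mp hA
          have h3 := abs_le.mp hB
          linarith [h2.1, h2.2, h3.1, h3.2]
    have heq2 : ((∫ s in t0..t, (s - t0) * f s) - ∫ s in t..t1, (t1 - s) * f s) / (t1 - t0) -
        ((∫ s in t0..t, (s - t0) * g s) - ∫ s in t..t1, (t1 - s) * g s) / (t1 - t0) =
        (((∫ s in t0..t, (s - t0) * f s) - ∫ s in t0..t, (s - t0) * g s) -
          ((∫ s in t..t1, (t1 - s) * f s) - ∫ s in t..t1, (t1 - s) * g s)) / (t1 - t0) := by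
      ring
    rw [heq2, abs_div, abs_of_pos h10, div_le_iff₀ h10]
    nlinarith [hkey]
/-- The integral operator
`S z (t) = -∫_{t₀}^{t₁} G(t,s) [α(s) (ż(s) + a)² exp(-z(s)/H) + β(s)] ds`
maps `C¹([t₀,t₁], ℝ)` into itself and is continuous with respect to the norm
`‖z‖ = max {sup |z|, sup |ż|}`. -/
theorem S_maps_C1_and_continuous (t0 t1 : ℝ) (ht : t0 < t1)
    (α β : ℝ → ℝ)
    (hα : ContinuousOn α (Icc t0 t1)) (hβ : ContinuousOn β (Icc t0 t1))
    (a H : ℝ) (hH : 0 < H)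
    (S : (ℝ → ℝ) → ℝ → ℝ)
    (hS : ∀ z t, S z t = -∫ s in t0..t1,
        Green t0 t1 t s *
          (α s * (derivWithin z (Icc t0 t1) s + a) ^ 2 * Real.exp (-(z s) / H) + β s)) :
    (∀ z : ℝ → ℝ, IsC1On z (Icc t0 t1) → IsC1On (S z) (Icc t0 t1)) ∧
    (∀ z : ℝ → ℝ, IsC1On z (Icc t0 t1) →
      ∀ ε > 0, ∃ δ > 0, ∀ w : ℝ → ℝ, IsC1On w (Icc t0 t1) →
        (∀ t ∈ Icc t0 t1, |w t - z t| ≤ δ ∧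
            |derivWithin w (Icc t0 t1) t - derivWithin z (Icc t0 t1) t| ≤ δ) →
        ∀ t ∈ Icc t0 t1, |S w t - S z t| ≤ ε ∧
          |derivWithin (S w) (Icc t0 t1) t - derivWithin (S z) (Icc t0 t1) t| ≤ ε) := by
  have h10 : (0:ℝ) < t1 - t0 := sub_pos.mpr ht
  have hFcont : ∀ z : ℝ → ℝ, IsC1On z (Icc t0 t1) →
      ContinuousOn (fun s => α s * (derivWithin z (Icc t0 t1) s + a) ^ 2 *
        Real.exp (-(z s) / H) + β s) (Icc t0 t1) := by
    intro z hz
    have hzc : ContinuousOn z (Icc t0 t1) := fun t htm => (hz.1 t htm).continuousWithinAt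
    exact ((hα.mul ((hz.2.add continuousOn_const).pow 2)).mul
      (Real.continuous_exp.comp_continuousOn (hzc.neg.div_const H))).add hβ
  have hSfun : ∀ z : ℝ → ℝ, S z = fun u => -∫ s in t0..t1,
      Green t0 t1 u s *
        (α s * (derivWithin z (Icc t0 t1) s + a) ^ 2 * Real.exp (-(z s) / H) + β s) :=
    fun z => funext (hS z)
  constructor
  · intro z hz
    rw [hSfun z]
    exact (green_isC1 ht (hFcont z hz)).1
  · intro z hz ε hε
    obtain ⟨M1, hM1⟩ := isCompact_Icc.exists_bound_of_continuousOn
      (fun t htm => (hz.1 t htm).continuousWithinAt)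
    obtain ⟨M2, hM2⟩ := isCompact_Icc.exists_bound_of_continuousOn hz.2
    obtain ⟨M3, hM3⟩ := isCompact_Icc.exists_bound_of_continuousOn hα
    set M : ℝ := max (max M1 M2) 0 with hMdef
    set Ma : ℝ := max M3 0 with hMadef
    have hM0 : 0 ≤ M := le_max_right _ _
    have hMa0 : 0 ≤ Ma := le_max_right _ _
    set E : ℝ := Real.exp ((M + H) / H) with hEdef
    set K : ℝ := Ma * E * ((2 * M + 2 * |a| + 1) + 2 * (M + |a|) ^ 2 / H) with hKdef
    have hK0 : 0 ≤ K := by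
      have hE0 : 0 < E := Real.exp_pos _
      have : (0:ℝ) ≤ (2 * M + 2 * |a| + 1) + 2 * (M + |a|) ^ 2 / H := by positivity
      positivity
    set L : ℝ := (K + 1) * ((t1 - t0) ^ 2 + 2 * (t1 - t0) + 1) with hLdef
    have hL0 : 0 < L := by
      have h2 : (0:ℝ) < (t1 - t0) ^ 2 + 2 * (t1 - t0) + 1 := by positivity
      have h3 : (0:ℝ) < K + 1 := by linarith
      exact mul_pos h3 h2
    set δ : ℝ := min (min 1 H) (ε / L) with hδdef
    have hδpos : 0 < δ := lt_min (lt_min one_pos hH) (div_pos hε hL0)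
    refine ⟨δ, hδpos, ?_⟩
    intro w hw hclose t htm
    have hδ1 : δ ≤ 1 := (min_le_left _ _).trans (min_le_left _ _)
    have hδH : δ ≤ H := (min_le_left _ _).trans (min_le_right _ _)
    have hδL : δ * L ≤ ε := by
      rw [← le_div_iff₀ hL0]
      exact min_le_right _ _
    have hptw : ∀ s ∈ Icc t0 t1,
        |(α s * (derivWithin w (Icc t0 t1) s + a) ^ 2 * Real.exp (-(w s) / H) + β s) -
          (α s * (derivWithin z (Icc t0 t1) s + a) ^ 2 * Real.exp (-(z s) / H) + β s)|
          ≤ δ * K := by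
      intro s hsm
      have h1 := (hclose s hsm).1
      have h2 := (hclose s hsm).2
      have hzb : |z s| ≤ M := by
        calc |z s| = ‖z s‖ := (Real.norm_eq_abs _).symm
        _ ≤ M1 := hM1 s hsm
        _ ≤ M := (le_max_left _ _).trans (le_max_left _ _)
      have hdb : |derivWithin z (Icc t0 t1) s| ≤ M := by
        calc |derivWithin z (Icc t0 t1) s| = ‖derivWithin z (Icc t0 t1) s‖ :=
          (Real.norm_eq_abs _).symm
        _ ≤ M2 := hM2 s hsm
        _ ≤ M := (le_max_right _ _).trans (le_max_left _ _)
      have hab : |α s| ≤ Ma := by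
        calc |α s| = ‖α s‖ := (Real.norm_eq_abs _).symm
        _ ≤ M3 := hM3 s hsm
        _ ≤ Ma := le_max_left _ _
      have heq : (α s * (derivWithin w (Icc t0 t1) s + a) ^ 2 * Real.exp (-(w s) / H) + β s) -
          (α s * (derivWithin z (Icc t0 t1) s + a) ^ 2 * Real.exp (-(z s) / H) + β s) =
          α s * (derivWithin w (Icc t0 t1) s + a) ^ 2 * Real.exp (-(w s) / H) -
          α s * (derivWithin z (Icc t0 t1) s + a) ^ 2 * Real.exp (-(z s) / H) := by ring
      rw [heq]
      exact nonlin_est hH hM0 hMa0 hδpos.le hδ1 hδH hab hdb hzb h2 h1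
    have hbounds := green_diff_bounds ht (hFcont w hw) (hFcont z hz)
      (mul_nonneg hδpos.le hK0) hptw htm
    have hfin1 : (t1 - t0) ^ 2 * (δ * K) ≤ ε := by
      nlinarith [mul_nonneg hδpos.le hK0, mul_nonneg (mul_nonneg hδpos.le hK0) h10.le,
        mul_nonneg hδpos.le h10.le, sq_nonneg (t1 - t0), hδpos.le]
    have hfin2 : 2 * (t1 - t0) * (δ * K) ≤ ε := by
      nlinarith [mul_nonneg hδpos.le hK0, mul_nonneg (mul_nonneg hδpos.le hK0) h10.le,
        sq_nonneg (t1 - t0), hδpos.le]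
    constructor
    · rw [hS w t, hS z t]
      exact hbounds.1.trans hfin1
    · rw [hSfun w, hSfun z]
      exact hbounds.2.trans hfin2
end

section
/- Let $t_0 < t_1$, let $\alpha, \beta : [t_0,t_1] \to \mathbb{R}$ be continuous, let $a \in \mathbb{R}$ and $H > 0$, and define the operator $S$ on $C^1([t_0,t_1],\mathbb{R})$ by $Sz(t) = -\int_{t_0}^{t_1} G(t,s)\big[\alpha(s)(\dot z(s) + a)^2 \exp\big(-\frac{z(s)}{H}\big) + \beta(s)\big] ds$, where $G(t,s) = \frac{(t - t_0)(t_1 - s)}{t_1 - t_0}$ if $t \le s$ and $G(t,s) = \frac{(s - t_0)(t_1 - t)}{t_1 - t_0}$ if $s \le t$. Then $S$ is a compact operator: the image under $S$ of every bounded subset of $C^1([t_0,t_1],\mathbb{R})$ is relatively compact in $C^1([t_0,t_1],\mathbb{R})$. -/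
open Set Filter
open intervalIntegral MeasureTheory

lemma green_min {t0 t1 : ℝ} (ht : t0 < t1) (t s : ℝ) :
    Green t0 t1 t s = min ((s - t0) * (t1 - t)) ((t - t0) * (t1 - s)) / (t1 - t0) := by
  unfold Green; split_ifs with h
  · rw [min_eq_right (by nlinarith)]
  · push_neg at h; rw [min_eq_left (by nlinarith)]

lemma key_lemma {t0 t1 : ℝ} (ht : t0 < t1) (q Z : ℝ → ℝ)
    (hq : ContinuousOn q (Icc t0 t1))
    (hZ : ∀ t, Z t = -∫ s in t0..t1, Green t0 t1 t s * q s) :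
    Z t0 = 0 ∧ ∀ t ∈ Icc t0 t1, HasDerivWithinAt Z
      (((∫ s in t0..t, (s - t0) * q s) - ∫ s in t..t1, (t1 - s) * q s) / (t1 - t0))
      (Icc t0 t1) t := by
  have hd : (0:ℝ) < t1 - t0 := by linarith
  -- interval integrability of continuous-on-I functions on subintervals
  have hInt : ∀ (g : ℝ → ℝ), ContinuousOn g (Icc t0 t1) → ∀ x ∈ Icc t0 t1, ∀ y ∈ Icc t0 t1,
      IntervalIntegrable g MeasureTheory.volume x y := by
    intro g hg x hx y hy
    exact (hg.mono (uIcc_subset_Icc hx hy)).intervalIntegrable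
  have hq1 : ContinuousOn (fun s => (s - t0) * q s) (Icc t0 t1) :=
    ((continuous_id.sub continuous_const).continuousOn).mul hq
  have hq2 : ContinuousOn (fun s => (t1 - s) * q s) (Icc t0 t1) :=
    ((continuous_const.sub continuous_id).continuousOn).mul hq
  have hGc : ∀ t, ContinuousOn (fun s => Green t0 t1 t s * q s) (Icc t0 t1) := by
    intro t
    have : ContinuousOn (fun s => min ((s - t0) * (t1 - t)) ((t - t0) * (t1 - s)) / (t1 - t0)) (Icc t0 t1) :=
      (((continuous_id.sub continuous_const).mul continuous_const).min
        (continuous_const.mul (continuous_const.sub continuous_id))).continuousOn.div_const _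
    exact (this.mul hq).congr (fun s _ => by rw [green_min ht]; rfl)
  -- the splitting formula
  have hsplit : ∀ t ∈ Icc t0 t1, Z t =
      -(((t1 - t) * ∫ s in t0..t, (s - t0) * q s) + (t - t0) * ∫ s in t..t1, (t1 - s) * q s) / (t1 - t0) := by
    intro t htI
    rw [hZ]
    have hadd : (∫ s in t0..t, Green t0 t1 t s * q s) + (∫ s in t..t1, Green t0 t1 t s * q s)
        = ∫ s in t0..t1, Green t0 t1 t s * q s :=
      integral_add_adjacent_intervals (hInt _ (hGc t) t0 (left_mem_Icc.2 ht.le) t htI)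
        (hInt _ (hGc t) t htI t1 (right_mem_Icc.2 ht.le))
    rw [← hadd]
    have h1 : (∫ s in t0..t, Green t0 t1 t s * q s)
        = (t1 - t) / (t1 - t0) * ∫ s in t0..t, (s - t0) * q s := by
      rw [← intervalIntegral.integral_const_mul]
      apply integral_congr
      intro s hs
      rw [uIcc_of_le htI.1] at hs
      show Green t0 t1 t s * q s = (t1 - t) / (t1 - t0) * ((s - t0) * q s)
      rw [green_min ht, min_eq_left (by nlinarith [hs.1, hs.2, htI.2])]
      ring
    have h2 : (∫ s in t..t1, Green t0 t1 t s * q s)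
        = (t - t0) / (t1 - t0) * ∫ s in t..t1, (t1 - s) * q s := by
      rw [← intervalIntegral.integral_const_mul]
      apply integral_congr
      intro s hs
      rw [uIcc_of_le htI.2] at hs
      show Green t0 t1 t s * q s = (t - t0) / (t1 - t0) * ((t1 - s) * q s)
      rw [green_min ht, min_eq_right (by nlinarith [hs.1, hs.2, htI.1])]
      ring
    rw [h1, h2]; ring
  constructor
  · rw [hZ]
    have : (∫ s in t0..t1, Green t0 t1 t0 s * q s) = ∫ s in t0..t1, (0:ℝ) := by
      apply integral_congr
      intro s hs
      rw [uIcc_of_le ht.le] at hs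
      show Green t0 t1 t0 s * q s = 0
      unfold Green
      rw [if_pos hs.1]
      ring
    rw [this]; simp
  · intro t htI
    haveI : Fact (t ∈ Icc t0 t1) := ⟨htI⟩
    -- derivative of F
    have hF : HasDerivWithinAt (fun u => ∫ s in t0..u, (s - t0) * q s)
        ((t - t0) * q t) (Icc t0 t1) t := by
      exact integral_hasDerivWithinAt_right (s := Icc t0 t1) (t := Icc t0 t1)
        (hInt _ hq1 t0 (left_mem_Icc.2 ht.le) t htI)
        (hq1.stronglyMeasurableAtFilter_nhdsWithin measurableSet_Icc t)
        (hq1 t htI)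
    have hG2 : HasDerivWithinAt (fun u => ∫ s in t0..u, (t1 - s) * q s)
        ((t1 - t) * q t) (Icc t0 t1) t :=
      integral_hasDerivWithinAt_right (s := Icc t0 t1) (t := Icc t0 t1)
        (hInt _ hq2 t0 (left_mem_Icc.2 ht.le) t htI)
        (hq2.stronglyMeasurableAtFilter_nhdsWithin measurableSet_Icc t)
        (hq2 t htI)
    -- K = const - G2
    have hKeq : ∀ x ∈ Icc t0 t1, (∫ s in x..t1, (t1 - s) * q s)
        = (∫ s in t0..t1, (t1 - s) * q s) - ∫ s in t0..x, (t1 - s) * q s := by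
      intro x hx
      rw [← integral_add_adjacent_intervals (hInt _ hq2 t0 (left_mem_Icc.2 ht.le) x hx)
        (hInt _ hq2 x hx t1 (right_mem_Icc.2 ht.le))]
      ring
    have hK : HasDerivWithinAt (fun u => ∫ s in u..t1, (t1 - s) * q s)
        (-((t1 - t) * q t)) (Icc t0 t1) t := by
      apply HasDerivWithinAt.congr_of_mem (f := fun u => (∫ s in t0..t1, (t1 - s) * q s) - ∫ s in t0..u, (t1 - s) * q s)
      · simpa using (hG2.const_sub (∫ s in t0..t1, (t1 - s) * q s))
      · intro x hx; exact hKeq x hx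
      · exact htI
    -- derivative of the explicit formula
    have hΦ : HasDerivWithinAt (fun u =>
        -(((t1 - u) * ∫ s in t0..u, (s - t0) * q s) + (u - t0) * ∫ s in u..t1, (t1 - s) * q s) / (t1 - t0))
        (((∫ s in t0..t, (s - t0) * q s) - ∫ s in t..t1, (t1 - s) * q s) / (t1 - t0))
        (Icc t0 t1) t := by
      have h1 : HasDerivWithinAt (fun u : ℝ => t1 - u) (-1) (Icc t0 t1) t :=
        (hasDerivWithinAt_id t _).const_sub t1
      have h3 : HasDerivWithinAt (fun u : ℝ => u - t0) 1 (Icc t0 t1) t :=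
        (hasDerivWithinAt_id t _).sub_const t0
      have h2 := (h1.mul hF).add (h3.mul hK)
      have h5 := (h2.div_const (t1 - t0)).neg
      convert h5 using 1
      · rfl
      · rfl
      · funext u; simp only [Pi.neg_apply, Pi.add_apply, Pi.mul_apply]; ring
      · ring
    exact hΦ.congr_of_mem (fun x hx => hsplit x hx) htI

lemma D_bound {t0 t1 C : ℝ} (ht : t0 < t1) (hC : 0 ≤ C) (q : ℝ → ℝ)
    (hq : ContinuousOn q (Icc t0 t1)) (hqb : ∀ s ∈ Icc t0 t1, |q s| ≤ C) :
    (∀ t ∈ Icc t0 t1,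
      |((∫ s in t0..t, (s - t0) * q s) - ∫ s in t..t1, (t1 - s) * q s) / (t1 - t0)|
        ≤ 2 * (t1 - t0) * C) ∧
    ∀ t ∈ Icc t0 t1, ∀ t' ∈ Icc t0 t1,
      |(((∫ s in t0..t, (s - t0) * q s) - ∫ s in t..t1, (t1 - s) * q s) / (t1 - t0))
        - (((∫ s in t0..t', (s - t0) * q s) - ∫ s in t'..t1, (t1 - s) * q s) / (t1 - t0))|
        ≤ 2 * C * |t - t'| := by
  have hd : (0:ℝ) < t1 - t0 := by linarith
  have hInt : ∀ (g : ℝ → ℝ), ContinuousOn g (Icc t0 t1) → ∀ x ∈ Icc t0 t1, ∀ y ∈ Icc t0 t1,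
      IntervalIntegrable g MeasureTheory.volume x y := fun g hg x hx y hy =>
    (hg.mono (uIcc_subset_Icc hx hy)).intervalIntegrable
  have hq1 : ContinuousOn (fun s => (s - t0) * q s) (Icc t0 t1) :=
    ((continuous_id.sub continuous_const).continuousOn).mul hq
  have hq2 : ContinuousOn (fun s => (t1 - s) * q s) (Icc t0 t1) :=
    ((continuous_const.sub continuous_id).continuousOn).mul hq
  have hb1 : ∀ s ∈ Icc t0 t1, ‖(s - t0) * q s‖ ≤ (t1 - t0) * C := by
    intro s hs
    rw [Real.norm_eq_abs, abs_mul]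
    apply mul_le_mul _ (hqb s hs) (abs_nonneg _) (by linarith)
    rw [abs_of_nonneg (by linarith [hs.1])]; linarith [hs.2]
  have hb2 : ∀ s ∈ Icc t0 t1, ‖(t1 - s) * q s‖ ≤ (t1 - t0) * C := by
    intro s hs
    rw [Real.norm_eq_abs, abs_mul]
    apply mul_le_mul _ (hqb s hs) (abs_nonneg _) (by linarith)
    rw [abs_of_nonneg (by linarith [hs.2])]; linarith [hs.1]
  have key1 : ∀ x ∈ Icc t0 t1, ∀ y ∈ Icc t0 t1,
      |∫ s in x..y, (s - t0) * q s| ≤ (t1 - t0) * C * |y - x| := by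
    intro x hx y hy
    exact intervalIntegral.norm_integral_le_of_norm_le_const
      (fun s hs => hb1 s (uIcc_subset_Icc hx hy (uIoc_subset_uIcc hs)))
  have key2 : ∀ x ∈ Icc t0 t1, ∀ y ∈ Icc t0 t1,
      |∫ s in x..y, (t1 - s) * q s| ≤ (t1 - t0) * C * |y - x| := by
    intro x hx y hy
    exact intervalIntegral.norm_integral_le_of_norm_le_const
      (fun s hs => hb2 s (uIcc_subset_Icc hx hy (uIoc_subset_uIcc hs)))
  have hl := left_mem_Icc.2 ht.le
  have hr := right_mem_Icc.2 ht.le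
  constructor
  · intro t htI
    rw [abs_div, abs_of_pos hd, div_le_iff₀ hd]
    have h1 := key1 t0 hl t htI
    have h2 := key2 t htI t1 hr
    have h3 : |t - t0| ≤ t1 - t0 := by rw [abs_of_nonneg (by linarith [htI.1])]; linarith [htI.2]
    have h4 : |t1 - t| ≤ t1 - t0 := by rw [abs_of_nonneg (by linarith [htI.2])]; linarith [htI.1]
    have h5 := abs_sub (∫ s in t0..t, (s - t0) * q s) (∫ s in t..t1, (t1 - s) * q s)
    have h7 : (t1 - t0) * C * |t - t0| ≤ (t1 - t0) * C * (t1 - t0) :=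
      mul_le_mul_of_nonneg_left h3 (by positivity)
    have h8 : (t1 - t0) * C * |t1 - t| ≤ (t1 - t0) * C * (t1 - t0) :=
      mul_le_mul_of_nonneg_left h4 (by positivity)
    have hgoal : 2 * (t1 - t0) * C * (t1 - t0) = 2 * ((t1 - t0) * C * (t1 - t0)) := by ring
    rw [hgoal]
    linarith
  · intro t htI t' ht'I
    have hKeq : ∀ x ∈ Icc t0 t1, (∫ s in x..t1, (t1 - s) * q s)
        = (∫ s in t0..t1, (t1 - s) * q s) - ∫ s in t0..x, (t1 - s) * q s := by
      intro x hx
      rw [← integral_add_adjacent_intervals (hInt _ hq2 t0 hl x hx) (hInt _ hq2 x hx t1 hr)]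
      ring
    have hF : (∫ s in t0..t, (s - t0) * q s) - (∫ s in t0..t', (s - t0) * q s)
        = ∫ s in t'..t, (s - t0) * q s :=
      integral_interval_sub_left (hInt _ hq1 t0 hl t htI) (hInt _ hq1 t0 hl t' ht'I)
    have hG : (∫ s in t0..t', (t1 - s) * q s) - (∫ s in t0..t, (t1 - s) * q s)
        = ∫ s in t..t', (t1 - s) * q s :=
      integral_interval_sub_left (hInt _ hq2 t0 hl t' ht'I) (hInt _ hq2 t0 hl t htI)
    rw [hKeq t htI, hKeq t' ht'I, div_sub_div_same, abs_div, abs_of_pos hd, div_le_iff₀ hd]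
    have e1 : ((∫ s in t0..t, (s - t0) * q s) - ((∫ s in t0..t1, (t1 - s) * q s) - ∫ s in t0..t, (t1 - s) * q s))
        - ((∫ s in t0..t', (s - t0) * q s) - ((∫ s in t0..t1, (t1 - s) * q s) - ∫ s in t0..t', (t1 - s) * q s))
        = (∫ s in t'..t, (s - t0) * q s) - ∫ s in t..t', (t1 - s) * q s := by
      rw [← hF, ← hG]; ring
    rw [e1]
    have h1 := key1 t' ht'I t htI
    have h2 := key2 t htI t' ht'I
    have h5 := abs_sub (∫ s in t'..t, (s - t0) * q s) (∫ s in t..t', (t1 - s) * q s)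
    rw [abs_sub_comm t' t] at h2
    have hgoal : 2 * C * |t - t'| * (t1 - t0) = 2 * ((t1 - t0) * C * |t - t'|) := by ring
    rw [hgoal]
    linarith


lemma ascoli_seq (t0 t1 : ℝ) (ht : t0 < t1) (D : ℕ → ℝ → ℝ) (R L : NNReal)
    (hlip : ∀ n, LipschitzOnWith L (D n) (Icc t0 t1))
    (hbd : ∀ n, ∀ t ∈ Icc t0 t1, |D n t| ≤ R) :
    ∃ φ : ℕ → ℕ, StrictMono φ ∧ ∃ g : ℝ → ℝ, Continuous g ∧
      TendstoUniformlyOn (fun k => D (φ k)) g atTop (Icc t0 t1) := by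
  haveI : CompactSpace ↥(Icc t0 t1) := isCompact_iff_compactSpace.mp isCompact_Icc
  have hc : ∀ n, Continuous (fun x : ↥(Icc t0 t1) => D n x) := fun n =>
    ((hlip n).continuousOn.restrict)
  set u : ℕ → BoundedContinuousFunction ↥(Icc t0 t1) ℝ := fun n =>
    BoundedContinuousFunction.mkOfCompact ⟨fun x => D n x, hc n⟩ with hu
  set A : Set (BoundedContinuousFunction ↥(Icc t0 t1) ℝ) := Set.range u with hA
  have hcomp : IsCompact (closure A) := by
    apply BoundedContinuousFunction.arzela_ascoli (Icc (-(R:ℝ)) R) isCompact_Icc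
    · rintro f x ⟨n, rfl⟩
      have := hbd n x x.2
      rw [abs_le] at this
      exact ⟨this.1, this.2⟩
    · apply Metric.equicontinuous_of_continuity_modulus (fun r => L * r)
      · exact (continuous_const.mul continuous_id).tendsto' 0 0 (by simp)
      · rintro x y ⟨f, n, rfl⟩
        have := (hlip n).dist_le_mul x.1 x.2 y.1 y.2
        exact this
  obtain ⟨F0, _, φ, hφ, hconv⟩ := hcomp.tendsto_subseq (fun k => subset_closure ⟨k, rfl⟩)
  refine ⟨φ, hφ, fun t => F0 (projIcc t0 t1 ht.le t),
    F0.continuous.comp continuous_projIcc, ?_⟩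
  have hUC : TendstoUniformly (fun k => (u (φ k) : ↥(Icc t0 t1) → ℝ)) F0 atTop :=
    BoundedContinuousFunction.tendsto_iff_tendstoUniformly.mp hconv
  rw [Metric.tendstoUniformlyOn_iff]
  intro ε hε
  filter_upwards [Metric.tendstoUniformly_iff.mp hUC ε hε] with k hk t htI
  have := hk ⟨t, htI⟩
  simp only [projIcc_of_mem ht.le htI]
  exact this


/-- The integral operator
`S z (t) = -∫_{t₀}^{t₁} G(t,s) [α(s) (ż(s) + a)² exp(-z(s)/H) + β(s)] ds`
is compact: the image under `S` of each bounded subset of `C¹([t₀,t₁], ℝ)` is relatively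
compact in `C¹([t₀,t₁], ℝ)`, i.e. every sequence in a bounded set has a subsequence whose
image under `S` converges in `C¹` (uniformly together with derivatives) to a `C¹` limit. -/

theorem S_compact (t0 t1 : ℝ) (ht : t0 < t1)
    (α β : ℝ → ℝ)
    (hα : ContinuousOn α (Icc t0 t1)) (hβ : ContinuousOn β (Icc t0 t1))
    (a H : ℝ) (hH : 0 < H)
    (S : (ℝ → ℝ) → ℝ → ℝ)
    (hS : ∀ z t, S z t = -∫ s in t0..t1,
        Green t0 t1 t s *
          (α s * (derivWithin z (Icc t0 t1) s + a) ^ 2 * Real.exp (-(z s) / H) + β s)) :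
    ∀ (M : ℝ) (zn : ℕ → ℝ → ℝ),
      (∀ n, IsC1On (zn n) (Icc t0 t1)) →
      (∀ n, ∀ t ∈ Icc t0 t1,
        |zn n t| ≤ M ∧ |derivWithin (zn n) (Icc t0 t1) t| ≤ M) →
      ∃ (φ : ℕ → ℕ) (w : ℝ → ℝ), StrictMono φ ∧ IsC1On w (Icc t0 t1) ∧
        TendstoUniformlyOn (fun k => S (zn (φ k))) w atTop (Icc t0 t1) ∧
        TendstoUniformlyOn (fun k => derivWithin (S (zn (φ k))) (Icc t0 t1))
          (derivWithin w (Icc t0 t1)) atTop (Icc t0 t1) := by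
  intro M zn hC1 hbd
  have hl : t0 ∈ Icc t0 t1 := left_mem_Icc.2 ht.le
  have hr : t1 ∈ Icc t0 t1 := right_mem_Icc.2 ht.le
  have hd : (0:ℝ) < t1 - t0 := by linarith
  set q : ℕ → ℝ → ℝ := fun n s =>
    α s * (derivWithin (zn n) (Icc t0 t1) s + a) ^ 2 * Real.exp (-(zn n s) / H) + β s with hq
  -- continuity of q n
  have hznc : ∀ n, ContinuousOn (zn n) (Icc t0 t1) := fun n t htI =>
    ((hC1 n).1 t htI).continuousWithinAt
  have hqc : ∀ n, ContinuousOn (q n) (Icc t0 t1) := by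
    intro n
    apply ContinuousOn.add _ hβ
    apply ContinuousOn.mul
    · exact hα.mul (((hC1 n).2.add continuousOn_const).pow 2)
    · exact Real.continuous_exp.comp_continuousOn (((hznc n).neg).div_const H)
  -- bound on q n
  obtain ⟨A0, hA0⟩ := isCompact_Icc.exists_bound_of_continuousOn hα
  obtain ⟨B0, hB0⟩ := isCompact_Icc.exists_bound_of_continuousOn hβ
  have hA0' : 0 ≤ A0 := le_trans (norm_nonneg _) (hA0 t0 hl)
  have hB0' : 0 ≤ B0 := le_trans (norm_nonneg _) (hB0 t0 hl)
  have hM : 0 ≤ M := le_trans (abs_nonneg _) ((hbd 0 t0 hl).1)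
  set C : ℝ := A0 * (M + |a|) ^ 2 * Real.exp (M / H) + B0 with hCdef
  have hCC : 0 ≤ C :=
    add_nonneg (mul_nonneg (mul_nonneg hA0' (sq_nonneg _)) (Real.exp_pos _).le) hB0'
  have hqb : ∀ n, ∀ s ∈ Icc t0 t1, |q n s| ≤ C := by
    intro n s hs
    obtain ⟨h1, h2⟩ := hbd n s hs
    have habs : |derivWithin (zn n) (Icc t0 t1) s + a| ≤ M + |a| :=
      (abs_add_le _ _).trans (add_le_add_left h2 _)
    have hsq : |(derivWithin (zn n) (Icc t0 t1) s + a) ^ 2| ≤ (M + |a|) ^ 2 := by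
      rw [abs_pow]
      exact pow_le_pow_left₀ (abs_nonneg _) habs 2
    have hexp : |Real.exp (-(zn n s) / H)| ≤ Real.exp (M / H) := by
      rw [Real.abs_exp]
      apply Real.exp_le_exp.2
      have : -(zn n s) ≤ M := (neg_le_abs _).trans h1
      exact div_le_div_of_nonneg_right this hH.le
    have hα' : |α s| ≤ A0 := by rw [← Real.norm_eq_abs]; exact hA0 s hs
    have hβ' : |β s| ≤ B0 := by rw [← Real.norm_eq_abs]; exact hB0 s hs
    calc |q n s| ≤ |α s * (derivWithin (zn n) (Icc t0 t1) s + a) ^ 2 *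
          Real.exp (-(zn n s) / H)| + |β s| := abs_add_le _ _
      _ ≤ A0 * (M + |a|) ^ 2 * Real.exp (M / H) + B0 := by
          apply add_le_add _ hβ'
          rw [abs_mul, abs_mul]
          apply mul_le_mul _ hexp (abs_nonneg _)
            (mul_nonneg hA0' (sq_nonneg _))
          exact mul_le_mul hα' hsq (abs_nonneg _) hA0'
  -- the candidate derivatives
  set D : ℕ → ℝ → ℝ := fun n t =>
    ((∫ s in t0..t, (s - t0) * q n s) - ∫ s in t..t1, (t1 - s) * q n s) / (t1 - t0) with hD
  have hkey : ∀ n, S (zn n) t0 = 0 ∧ ∀ t ∈ Icc t0 t1,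
      HasDerivWithinAt (S (zn n)) (D n t) (Icc t0 t1) t := fun n =>
    key_lemma ht (q n) (S (zn n)) (hqc n) (fun t => hS (zn n) t)
  have hDb := fun n => D_bound ht hCC (q n) (hqc n) (hqb n)
  have hlip : ∀ n, LipschitzOnWith (2 * C).toNNReal (D n) (Icc t0 t1) := by
    intro n
    apply LipschitzOnWith.of_dist_le_mul
    intro x hx y hy
    rw [Real.dist_eq, Real.dist_eq, Real.coe_toNNReal _ (by linarith)]
    exact (hDb n).2 x hx y hy
  have hbdD : ∀ n, ∀ t ∈ Icc t0 t1, |D n t| ≤ ((2 * (t1 - t0) * C).toNNReal : ℝ) := by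
    intro n t htI
    rw [Real.coe_toNNReal _ (by nlinarith)]
    exact (hDb n).1 t htI
  obtain ⟨φ, hφ, g, hgc, hgu⟩ := ascoli_seq t0 t1 ht D _ _ hlip hbdD
  -- the limit function
  set w : ℝ → ℝ := fun t => ∫ s in t0..t, g s with hwdef
  have hgint : ∀ x y : ℝ, IntervalIntegrable g MeasureTheory.volume x y :=
    fun x y => hgc.intervalIntegrable x y
  have hw : ∀ t ∈ Icc t0 t1, HasDerivWithinAt w (g t) (Icc t0 t1) t := by
    intro t htI
    haveI : Fact (t ∈ Icc t0 t1) := ⟨htI⟩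
    exact intervalIntegral.integral_hasDerivWithinAt_right (s := Icc t0 t1) (t := Icc t0 t1)
      (hgint t0 t)
      (hgc.continuousOn.stronglyMeasurableAtFilter_nhdsWithin measurableSet_Icc t)
      (hgc.continuousWithinAt)
  have hwderiv : ∀ t ∈ Icc t0 t1, derivWithin w (Icc t0 t1) t = g t := fun t htI =>
    (hw t htI).derivWithin (uniqueDiffOn_Icc ht t htI)
  have hderivS : ∀ n, ∀ t ∈ Icc t0 t1, derivWithin (S (zn n)) (Icc t0 t1) t = D n t :=
    fun n t htI => ((hkey n).2 t htI).derivWithin (uniqueDiffOn_Icc ht t htI)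
  -- FTC2 for S
  have hDc : ∀ n, ContinuousOn (D n) (Icc t0 t1) := fun n => (hlip n).continuousOn
  have hSint : ∀ n, ∀ t ∈ Icc t0 t1, S (zn n) t = ∫ s in t0..t, D n s := by
    intro n t htI
    have hsub : Icc t0 t ⊆ Icc t0 t1 := Icc_subset_Icc le_rfl htI.2
    have hcont0 : ContinuousOn (S (zn n)) (Icc t0 t1) :=
      fun x hx => ((hkey n).2 x hx).continuousWithinAt
    have hcont : ContinuousOn (S (zn n)) (Icc t0 t) := hcont0.mono hsub
    have hderiv : ∀ x ∈ Ioo t0 t, HasDerivWithinAt (S (zn n)) (D n x) (Ioi x) x := by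
      intro x hx
      have hxI : x ∈ Icc t0 t1 := ⟨hx.1.le, hx.2.le.trans htI.2⟩
      have := ((hkey n).2 x hxI).hasDerivAt
        (Icc_mem_nhds hx.1 (lt_of_lt_of_le hx.2 htI.2))
      exact this.hasDerivWithinAt
    have hint : IntervalIntegrable (D n) MeasureTheory.volume t0 t :=
      ((hDc n).mono (uIcc_subset_Icc hl htI)).intervalIntegrable
    have := intervalIntegral.integral_eq_sub_of_hasDeriv_right_of_le htI.1 hcont hderiv hint
    rw [(hkey n).1] at this
    linarith [this]
  refine ⟨φ, w, hφ, ?_, ?_, ?_⟩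
  · refine ⟨fun t htI => ?_, ?_⟩
    · rw [hwderiv t htI]; exact hw t htI
    · exact hgc.continuousOn.congr (fun t htI => hwderiv t htI)
  · -- uniform convergence of S (zn (φ k)) to w
    rw [Metric.tendstoUniformlyOn_iff]
    intro ε hε
    have hδ : 0 < ε / (2 * (t1 - t0)) := by positivity
    filter_upwards [Metric.tendstoUniformlyOn_iff.1 hgu (ε / (2 * (t1 - t0))) hδ] with k hk t htI
    rw [Real.dist_eq, hSint (φ k) t htI]
    have hDint : IntervalIntegrable (D (φ k)) MeasureTheory.volume t0 t :=
      ((hDc (φ k)).mono (uIcc_subset_Icc hl htI)).intervalIntegrable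
    rw [hwdef]
    have hsub : (∫ s in t0..t, g s) - (∫ s in t0..t, D (φ k) s)
        = ∫ s in t0..t, (g s - D (φ k) s) :=
      (intervalIntegral.integral_sub (hgint t0 t) hDint).symm
    rw [hsub]
    have hbound : ‖∫ s in t0..t, (g s - D (φ k) s)‖ ≤ (ε / (2 * (t1 - t0))) * |t - t0| := by
      refine intervalIntegral.norm_integral_le_of_norm_le_const (fun s hs => ?_)
      have hsI : s ∈ Icc t0 t1 := uIcc_subset_Icc hl htI (uIoc_subset_uIcc hs)
      have := hk s hsI
      rw [Real.dist_eq] at this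
      exact (le_of_lt this)
    have h3 : |t - t0| ≤ t1 - t0 := by
      rw [abs_of_nonneg (by linarith [htI.1])]; linarith [htI.2]
    calc |∫ s in t0..t, (g s - D (φ k) s)| ≤ (ε / (2 * (t1 - t0))) * |t - t0| := hbound
      _ ≤ (ε / (2 * (t1 - t0))) * (t1 - t0) := mul_le_mul_of_nonneg_left h3 hδ.le
      _ = ε / 2 := by field_simp
      _ < ε := by linarith
  · -- uniform convergence of derivatives
    apply TendstoUniformlyOn.congr_right
    · apply hgu.congr
      filter_upwards with k
      intro t htI
      exact (hderivS (φ k) t htI).symm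
    · exact fun t htI => (hwderiv t htI).symm
end

section
/- Let $t_0 < t_1$, let $\alpha, \beta : [t_0,t_1] \to \mathbb{R}$ be continuous, let $a \ge 0$ and $H > 0$, let $G$ be defined by $G(t,s) = \frac{(t - t_0)(t_1 - s)}{t_1 - t_0}$ if $t \le s$ and $G(t,s) = \frac{(s - t_0)(t_1 - t)}{t_1 - t_0}$ if $s \le t$, and set $b(t) = -\int_{t_0}^{t_1} G(t,s)\beta(s)\, ds$, $G_0 = \sup_t \int_{t_0}^{t_1} G(t,s)\, ds$, and $G_1 = \sup_t \int_{t_0}^{t_1} |\frac{\partial G}{\partial t}(t,s)|\, ds$. Suppose there exists $R > 0$ such that $\max\{G_0, G_1\} \cdot \sup_t|\alpha(t)| \cdot e^{R/H} (R + a)^2 + \max\{\sup_t|b(t)|, \sup_t|b'(t)|\} \le R$. Then the boundary value problem $\ddot z(t) = \alpha(t)(\dot z(t) + a)^2 \exp\big(-\frac{z(t)}{H}\big) + \beta(t)$ on $[t_0,t_1]$, $z(t_0) = z(t_1) = 0$, admits at least one twice continuously differentiable solution $z$ with $\max\{\sup_t|z(t)|, \sup_t|\dot z(t)|\} \le R$.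 -/
open Set MeasureTheory intervalIntegral

namespace BVPAux
set_option linter.unusedSectionVars false
set_option linter.unusedVariables false




/-- truncation to `[-R, R]` -/
noncomputable def tr (R x : ℝ) : ℝ := max (-R) (min x R)

lemma tr_continuous (R : ℝ) : Continuous (tr R) := by
  unfold tr; fun_prop

lemma abs_tr_le {R : ℝ} (hR : 0 ≤ R) (x : ℝ) : |tr R x| ≤ R := by
  rw [abs_le]; unfold tr
  constructor
  · exact le_max_left _ _
  · exact max_le (by linarith) (min_le_right _ _)

lemma tr_eq_of_abs_le {R x : ℝ} (h : |x| ≤ R) : tr R x = x := by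
  rw [abs_le] at h; unfold tr
  rw [min_eq_left h.2, max_eq_right h.1]

lemma abs_tr_sub_tr {R : ℝ} (x y : ℝ) : |tr R x - tr R y| ≤ |x - y| := by
  unfold tr
  calc |max (-R) (min x R) - max (-R) (min y R)|
      = |max (min x R) (-R) - max (min y R) (-R)| := by rw [max_comm (-R), max_comm (-R)]
    _ ≤ |min x R - min y R| := abs_max_sub_max_le_abs _ _ _
    _ ≤ max |x - y| |R - R| := abs_min_sub_min_le_max _ _ _ _
    _ ≤ |x - y| := by simp

lemma exp_lip {c u v : ℝ} (hu : u ≤ c) (hv : v ≤ c) :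
    |Real.exp u - Real.exp v| ≤ Real.exp c * |u - v| := by
  wlog h : v ≤ u generalizing u v
  · rw [abs_sub_comm, abs_sub_comm u v]; exact this hv hu (le_of_not_ge h)
  rw [abs_of_nonneg (sub_nonneg.2 (Real.exp_le_exp.2 h)), abs_of_nonneg (sub_nonneg.2 h)]
  have h1 : Real.exp u - Real.exp v = Real.exp v * (Real.exp (u - v) - 1) := by
    rw [mul_sub, ← Real.exp_add]; ring_nf
  have h2 : Real.exp (u - v) - 1 ≤ (u - v) * Real.exp (u - v) := by
    have := Real.add_one_le_exp (-(u - v))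
    have h3 : Real.exp (u - v) > 0 := Real.exp_pos _
    have h4 : Real.exp (-(u - v)) * Real.exp (u - v) = 1 := by
      rw [← Real.exp_add]; simp
    nlinarith
  calc Real.exp u - Real.exp v ≤ Real.exp v * ((u - v) * Real.exp (u - v)) := by
        rw [h1]; exact mul_le_mul_of_nonneg_left h2 (Real.exp_pos _).le
    _ = (u - v) * Real.exp u := by
        rw [show Real.exp u = Real.exp v * Real.exp (u - v) by rw [← Real.exp_add]; ring_nf]
        ring
    _ ≤ (u - v) * Real.exp c := by
        exact mul_le_mul_of_nonneg_left (Real.exp_le_exp.2 hu) (by linarith)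
    _ = Real.exp c * (u - v) := mul_comm _ _

lemma ae_off_point (t : ℝ) : ∀ᵐ s : ℝ, s ≠ t := by
  rw [MeasureTheory.ae_iff]
  have : {s : ℝ | ¬ s ≠ t} = {t} := by ext s; simp
  rw [this]
  exact measure_singleton t

section Green

variable {t0 t1 : ℝ} (ht : t0 < t1)

omit ht in
lemma green_continuous_s (t : ℝ) : Continuous (fun s => Green t0 t1 t s) := by
  unfold Green
  apply Continuous.if_le
  · fun_prop
  · fun_prop
  · exact continuous_const
  · exact continuous_id
  · intro s hs; rw [← hs]

lemma green_eq_left {t s : ℝ} (h : s ≤ t) :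
    Green t0 t1 t s = (s - t0) * (t1 - t) / (t1 - t0) := by
  unfold Green
  rcases lt_or_eq_of_le h with h' | h'
  · rw [if_neg (not_le.2 h')]
  · subst h'; simp

lemma green_eq_right {t s : ℝ} (h : t ≤ s) :
    Green t0 t1 t s = (t - t0) * (t1 - s) / (t1 - t0) := by
  unfold Green; rw [if_pos h]

lemma deriv_green_of_lt {t s : ℝ} (h : t < s) :
    deriv (fun u => Green t0 t1 u s) t = (t1 - s) / (t1 - t0) := by
  have hev : (fun u => Green t0 t1 u s) =ᶠ[nhds t] (fun u => (u - t0) * ((t1 - s) / (t1 - t0))) := by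
    filter_upwards [Iio_mem_nhds h] with u hu
    rw [green_eq_right (le_of_lt hu)]; ring
  rw [hev.deriv_eq]
  have : HasDerivAt (fun u : ℝ => (u - t0) * ((t1 - s) / (t1 - t0))) ((t1 - s) / (t1 - t0)) t := by
    simpa using ((hasDerivAt_id t).sub_const t0).mul_const ((t1 - s) / (t1 - t0))
  exact this.deriv

lemma deriv_green_of_gt {t s : ℝ} (h : s < t) :
    deriv (fun u => Green t0 t1 u s) t = -((s - t0) / (t1 - t0)) := by
  have hev : (fun u => Green t0 t1 u s) =ᶠ[nhds t]
      (fun u => (t1 - u) * ((s - t0) / (t1 - t0))) := by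
    filter_upwards [Ioi_mem_nhds h] with u hu
    rw [green_eq_left (le_of_lt hu)]; ring
  rw [hev.deriv_eq]
  have : HasDerivAt (fun u : ℝ => (t1 - u) * ((s - t0) / (t1 - t0)))
      (-((s - t0) / (t1 - t0))) t := by
    simpa using ((hasDerivAt_id t).const_sub t1).mul_const ((s - t0) / (t1 - t0))
  exact this.deriv

end Green






lemma intervalIntegral_congr_off {a b t : ℝ} {f g : ℝ → ℝ}
    (h : ∀ s ∈ uIoc a b, s ≠ t → f s = g s) :
    ∫ s in a..b, f s = ∫ s in a..b, g s := by
  apply intervalIntegral.integral_congr_ae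
  filter_upwards [ae_off_point t] with s hs hmem
  exact h s hmem hs

lemma intervalIntegrable_off {a b t : ℝ} {f g : ℝ → ℝ}
    (h : ∀ s ∈ uIoc a b, s ≠ t → f s = g s)
    (hg : IntervalIntegrable g volume a b) : IntervalIntegrable f volume a b := by
  rw [intervalIntegrable_iff] at *
  apply hg.congr_fun_ae
  apply ae_restrict_of_ae_restrict_of_subset (Set.Subset.refl _)
  rw [ae_restrict_iff' measurableSet_uIoc]
  filter_upwards [ae_off_point t] with s hs hmem
  exact (h s hmem hs).symm

lemma int_id_sub (c a b : ℝ) : ∫ s in a..b, (s - c) = (b - c)^2/2 - (a - c)^2/2 := by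
  have : ∫ s in a..b, (s - c) = (∫ s in a..b, s) - ∫ s in a..b, (c : ℝ) :=
    integral_sub intervalIntegrable_id intervalIntegrable_const
  rw [this, integral_id, intervalIntegral.integral_const, smul_eq_mul]
  ring

lemma int_const_sub (c a b : ℝ) : ∫ s in a..b, (c - s) = (c - a)^2/2 - (c - b)^2/2 := by
  have : ∫ s in a..b, (c - s) = (∫ s in a..b, (c:ℝ)) - ∫ s in a..b, s :=
    integral_sub intervalIntegrable_const intervalIntegrable_id
  rw [this, integral_id, intervalIntegral.integral_const, smul_eq_mul]
  ring






section GreenInt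

set_option linter.unusedSectionVars false
variable {t0 t1 : ℝ} (ht : t0 < t1) {q : ℝ → ℝ} (hq : ContinuousOn q (Icc t0 t1))
variable {t : ℝ} (htm : t ∈ Icc t0 t1)

include ht hq htm

lemma q_ii_left : IntervalIntegrable (fun s => (s - t0) * q s) volume t0 t := by
  apply ContinuousOn.intervalIntegrable
  rw [uIcc_of_le htm.1]
  exact (continuousOn_id.sub continuousOn_const).mul
    (hq.mono (Icc_subset_Icc le_rfl htm.2))

lemma q_ii_right : IntervalIntegrable (fun s => (t1 - s) * q s) volume t t1 := by
  apply ContinuousOn.intervalIntegrable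
  rw [uIcc_of_le htm.2]
  exact (continuousOn_const.sub continuousOn_id).mul
    (hq.mono (Icc_subset_Icc htm.1 le_rfl))

lemma green_int :
    ∫ s in t0..t1, Green t0 t1 t s * q s
      = ((t1 - t)/(t1 - t0)) * (∫ s in t0..t, (s - t0) * q s)
        + ((t - t0)/(t1 - t0)) * (∫ s in t..t1, (t1 - s) * q s) := by
  have i1 : IntervalIntegrable (fun s => Green t0 t1 t s * q s) volume t0 t := by
    apply ContinuousOn.intervalIntegrable
    rw [uIcc_of_le htm.1]
    exact ((green_continuous_s (t0 := t0) (t1 := t1) t).continuousOn).mul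
      (hq.mono (Icc_subset_Icc le_rfl htm.2))
  have i2 : IntervalIntegrable (fun s => Green t0 t1 t s * q s) volume t t1 := by
    apply ContinuousOn.intervalIntegrable
    rw [uIcc_of_le htm.2]
    exact ((green_continuous_s (t0 := t0) (t1 := t1) t).continuousOn).mul
      (hq.mono (Icc_subset_Icc htm.1 le_rfl))
  rw [← integral_add_adjacent_intervals i1 i2]
  have e1 : ∫ s in t0..t, Green t0 t1 t s * q s
      = ((t1 - t)/(t1 - t0)) * (∫ s in t0..t, (s - t0) * q s) := by
    rw [← intervalIntegral.integral_const_mul]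
    apply integral_congr
    intro s hs
    rw [uIcc_of_le htm.1] at hs
    show Green t0 t1 t s * q s = (t1 - t)/(t1 - t0) * ((s - t0) * q s)
    rw [green_eq_left hs.2]; ring
  have e2 : ∫ s in t..t1, Green t0 t1 t s * q s
      = ((t - t0)/(t1 - t0)) * (∫ s in t..t1, (t1 - s) * q s) := by
    rw [← intervalIntegral.integral_const_mul]
    apply integral_congr
    intro s hs
    rw [uIcc_of_le htm.2] at hs
    show Green t0 t1 t s * q s = (t - t0)/(t1 - t0) * ((t1 - s) * q s)
    rw [green_eq_right hs.1]; ring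
  rw [e1, e2]

lemma dgreen_int :
    ∫ s in t0..t1, deriv (fun u => Green t0 t1 u s) t * q s
      = (-(1/(t1 - t0))) * (∫ s in t0..t, (s - t0) * q s)
        + (1/(t1 - t0)) * (∫ s in t..t1, (t1 - s) * q s) := by
  have key1 : ∀ s ∈ uIoc t0 t, s ≠ t →
      deriv (fun u => Green t0 t1 u s) t * q s = (-(1/(t1 - t0))) * ((s - t0) * q s) := by
    intro s hs hst
    rw [uIoc_of_le htm.1] at hs
    rw [deriv_green_of_gt (lt_of_le_of_ne hs.2 hst)]
    ring
  have key2 : ∀ s ∈ uIoc t t1, s ≠ t →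
      deriv (fun u => Green t0 t1 u s) t * q s = (1/(t1 - t0)) * ((t1 - s) * q s) := by
    intro s hs hst
    rw [uIoc_of_le htm.2] at hs
    rw [deriv_green_of_lt hs.1]
    ring
  have i1 : IntervalIntegrable (fun s => deriv (fun u => Green t0 t1 u s) t * q s) volume t0 t :=
    intervalIntegrable_off key1 ((q_ii_left ht hq htm).const_mul _)
  have i2 : IntervalIntegrable (fun s => deriv (fun u => Green t0 t1 u s) t * q s) volume t t1 :=
    intervalIntegrable_off key2 ((q_ii_right ht hq htm).const_mul _)
  rw [← integral_add_adjacent_intervals i1 i2,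
    intervalIntegral_congr_off key1, intervalIntegral_congr_off key2,
    intervalIntegral.integral_const_mul, intervalIntegral.integral_const_mul]

end GreenInt

lemma dgreen_abs_int {t0 t1 : ℝ} (ht : t0 < t1) {t : ℝ} (htm : t ∈ Icc t0 t1) :
    ∫ s in t0..t1, |deriv (fun u => Green t0 t1 u s) t|
      = (1/(t1 - t0)) * (∫ s in t0..t, (s - t0))
        + (1/(t1 - t0)) * (∫ s in t..t1, (t1 - s)) := by
  have key1 : ∀ s ∈ uIoc t0 t, s ≠ t →
      |deriv (fun u => Green t0 t1 u s) t| = (1/(t1 - t0)) * (s - t0) := by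
    intro s hs hst
    rw [uIoc_of_le htm.1] at hs
    rw [deriv_green_of_gt (lt_of_le_of_ne hs.2 hst), abs_neg, abs_div,
      abs_of_nonneg (by linarith [hs.1] : (0:ℝ) ≤ s - t0),
      abs_of_pos (by linarith : (0:ℝ) < t1 - t0)]
    ring
  have key2 : ∀ s ∈ uIoc t t1, s ≠ t →
      |deriv (fun u => Green t0 t1 u s) t| = (1/(t1 - t0)) * (t1 - s) := by
    intro s hs hst
    rw [uIoc_of_le htm.2] at hs
    rw [deriv_green_of_lt hs.1, abs_div,
      abs_of_nonneg (by linarith [hs.2] : (0:ℝ) ≤ t1 - s),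
      abs_of_pos (by linarith : (0:ℝ) < t1 - t0)]
    ring
  have i1 : IntervalIntegrable (fun s => |deriv (fun u => Green t0 t1 u s) t|) volume t0 t :=
    intervalIntegrable_off key1
      ((ContinuousOn.intervalIntegrable (by fun_prop)).const_mul _)
  have i2 : IntervalIntegrable (fun s => |deriv (fun u => Green t0 t1 u s) t|) volume t t1 :=
    intervalIntegrable_off key2
      ((ContinuousOn.intervalIntegrable (by fun_prop)).const_mul _)
  rw [← integral_add_adjacent_intervals i1 i2,
    intervalIntegral_congr_off key1, intervalIntegral_congr_off key2,
    intervalIntegral.integral_const_mul, intervalIntegral.integral_const_mul]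




section Repr
set_option linter.unusedSectionVars false

variable {t0 t1 : ℝ} (ht : t0 < t1) {z p q : ℝ → ℝ}
  (hz : ∀ s ∈ Icc t0 t1, HasDerivWithinAt z (p s) (Icc t0 t1) s)
  (hp : ∀ s ∈ Icc t0 t1, HasDerivWithinAt p (q s) (Icc t0 t1) s)
  (hq : ContinuousOn q (Icc t0 t1))
  {t : ℝ} (htm : t ∈ Icc t0 t1)


include ht hz hp hq htm

lemma icc_mem_nhds_Ioi {x : ℝ} (hx : x ∈ Ioo t0 t1) : Icc t0 t1 ∈ nhdsWithin x (Ioi x) :=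
  mem_nhdsWithin_of_mem_nhds (Filter.mem_of_superset (Ioo_mem_nhds hx.1 hx.2) Ioo_subset_Icc_self)

lemma ftc_piece_left :
    ∫ s in t0..t, (s - t0) * q s = (t - t0) * p t - z t + z t0 := by
  have hzc : ContinuousOn z (Icc t0 t1) := fun s hs => (hz s hs).continuousWithinAt
  have hpc : ContinuousOn p (Icc t0 t1) := fun s hs => (hp s hs).continuousWithinAt
  have hsub : Icc t0 t ⊆ Icc t0 t1 := Icc_subset_Icc le_rfl htm.2
  have key := integral_eq_sub_of_hasDeriv_right_of_le htm.1
    (f := fun s => (s - t0) * p s - z s) (f' := fun s => (s - t0) * q s)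
    (((continuousOn_id.sub continuousOn_const).mul (hpc.mono hsub)).sub (hzc.mono hsub))
    (fun x hx => by
      have hx1 : x ∈ Ioo t0 t1 := ⟨hx.1, lt_of_lt_of_le hx.2 htm.2⟩
      have hmem := icc_mem_nhds_Ioi ht hz hp hq htm hx1
      have hp' : HasDerivWithinAt p (q x) (Ioi x) x :=
        (hp x (Ioo_subset_Icc_self hx1)).mono_of_mem_nhdsWithin hmem
      have hz' : HasDerivWithinAt z (p x) (Ioi x) x :=
        (hz x (Ioo_subset_Icc_self hx1)).mono_of_mem_nhdsWithin hmem
      have h1 : HasDerivWithinAt (fun s : ℝ => (s - t0) * p s)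
          (1 * p x + (x - t0) * q x) (Ioi x) x :=
        ((hasDerivWithinAt_id x (Ioi x)).sub_const t0).mul hp'
      have := h1.sub hz'
      convert this using 1
      · rfl
      ring)
    (q_ii_left ht hq htm)
  beta_reduce at key
  have h0 : (t0 - t0) * p t0 = 0 := by ring
  linarith [key]

lemma ftc_piece_right :
    ∫ s in t..t1, (t1 - s) * q s = z t1 - z t - (t1 - t) * p t := by
  have hzc : ContinuousOn z (Icc t0 t1) := fun s hs => (hz s hs).continuousWithinAt
  have hpc : ContinuousOn p (Icc t0 t1) := fun s hs => (hp s hs).continuousWithinAt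
  have hsub : Icc t t1 ⊆ Icc t0 t1 := Icc_subset_Icc htm.1 le_rfl
  have key := integral_eq_sub_of_hasDeriv_right_of_le htm.2
    (f := fun s => (t1 - s) * p s + z s) (f' := fun s => (t1 - s) * q s)
    (((continuousOn_const.sub continuousOn_id).mul (hpc.mono hsub)).add (hzc.mono hsub))
    (fun x hx => by
      have hx1 : x ∈ Ioo t0 t1 := ⟨lt_of_le_of_lt htm.1 hx.1, hx.2⟩
      have hmem := icc_mem_nhds_Ioi ht hz hp hq htm hx1
      have hp' : HasDerivWithinAt p (q x) (Ioi x) x :=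
        (hp x (Ioo_subset_Icc_self hx1)).mono_of_mem_nhdsWithin hmem
      have hz' : HasDerivWithinAt z (p x) (Ioi x) x :=
        (hz x (Ioo_subset_Icc_self hx1)).mono_of_mem_nhdsWithin hmem
      have h1 : HasDerivWithinAt (fun s : ℝ => (t1 - s) * p s)
          (-1 * p x + (t1 - x) * q x) (Ioi x) x :=
        ((hasDerivWithinAt_id x (Ioi x)).const_sub t1).mul hp'
      have := h1.add hz'
      convert this using 1
      · rfl
      ring)
    (q_ii_right ht hq htm)
  beta_reduce at key
  have h0 : (t1 - t1) * p t1 = 0 := by ring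
  linarith [key]

lemma green_repr (hz0 : z t0 = 0) (hz1 : z t1 = 0) :
    z t = -∫ s in t0..t1, Green t0 t1 t s * q s := by
  rw [green_int ht hq htm, ftc_piece_left ht hz hp hq htm, ftc_piece_right ht hz hp hq htm,
    hz0, hz1]
  have hd : t1 - t0 ≠ 0 := by linarith [ht]
  field_simp
  ring

lemma dgreen_repr (hz0 : z t0 = 0) (hz1 : z t1 = 0) :
    p t = -∫ s in t0..t1, deriv (fun u => Green t0 t1 u s) t * q s := by
  rw [dgreen_int ht hq htm, ftc_piece_left ht hz hp hq htm, ftc_piece_right ht hz hp hq htm,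
    hz0, hz1]
  have hd : t1 - t0 ≠ 0 := by linarith [ht]
  field_simp
  ring

end Repr


section FTC
variable {t0 t1 : ℝ}

lemma ftc_eval (ht : t0 < t1) {f f' : ℝ → ℝ}
    (h : ∀ s ∈ Icc t0 t1, HasDerivWithinAt f (f' s) (Icc t0 t1) s)
    (hf' : ContinuousOn f' (Icc t0 t1)) {t : ℝ} (htm : t ∈ Icc t0 t1) :
    f t = f t0 + ∫ s in t0..t, f' s := by
  have hfc : ContinuousOn f (Icc t0 t1) := fun s hs => (h s hs).continuousWithinAt
  have hsub : Icc t0 t ⊆ Icc t0 t1 := Icc_subset_Icc le_rfl htm.2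
  have key := integral_eq_sub_of_hasDeriv_right_of_le htm.1 (hfc.mono hsub)
    (fun x hx => by
      have hx1 : x ∈ Ioo t0 t1 := ⟨hx.1, lt_of_lt_of_le hx.2 htm.2⟩
      exact (h x (Ioo_subset_Icc_self hx1)).mono_of_mem_nhdsWithin
        (mem_nhdsWithin_of_mem_nhds
          (Filter.mem_of_superset (Ioo_mem_nhds hx1.1 hx1.2) Ioo_subset_Icc_self)))
    (hf'.mono (by rw [uIcc_of_le htm.1]; exact hsub)).intervalIntegrable
  linarith [key]

lemma abs_int_le (ht : t0 < t1) {f : ℝ → ℝ} (hf : ContinuousOn f (Icc t0 t1))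
    {M : ℝ} (hM : ∀ s ∈ Icc t0 t1, |f s| ≤ M) {t : ℝ} (htm : t ∈ Icc t0 t1) :
    |∫ s in t0..t, f s| ≤ M * (t - t0) := by
  have hsub : Icc t0 t ⊆ Icc t0 t1 := Icc_subset_Icc le_rfl htm.2
  have hfi : IntervalIntegrable f volume t0 t :=
    (hf.mono (by rw [uIcc_of_le htm.1]; exact hsub)).intervalIntegrable
  calc |∫ s in t0..t, f s| ≤ ∫ s in t0..t, |f s| := abs_integral_le_integral_abs htm.1
    _ ≤ ∫ _ in t0..t, M :=
        integral_mono_on htm.1 hfi.abs intervalIntegrable_const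
          (fun x hx => hM x (hsub hx))
    _ = (t - t0) * M := by rw [intervalIntegral.integral_const, smul_eq_mul]
    _ = M * (t - t0) := mul_comm _ _

lemma abs_int_le' (ht : t0 < t1) {f : ℝ → ℝ} (hf : ContinuousOn f (Icc t0 t1))
    {c M X : ℝ} (hM : ∀ s ∈ Icc t0 t1, |f s| ≤ M) (hc : c ∈ Icc t0 t1) {t : ℝ}
    (htm : t ∈ Icc c t1) (hX : M * (t - c) ≤ X) :
    |∫ s in c..t, f s| ≤ X := by
  have hsub : Icc c t ⊆ Icc t0 t1 := Icc_subset_Icc hc.1 htm.2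
  have hfi : IntervalIntegrable f volume c t :=
    (hf.mono (by rw [uIcc_of_le htm.1]; exact hsub)).intervalIntegrable
  calc |∫ s in c..t, f s| ≤ ∫ s in c..t, |f s| := abs_integral_le_integral_abs htm.1
    _ ≤ ∫ _ in c..t, M :=
        integral_mono_on htm.1 hfi.abs intervalIntegrable_const
          (fun x hx => hM x (hsub hx))
    _ = (t - c) * M := by rw [intervalIntegral.integral_const, smul_eq_mul]
    _ ≤ X := by rw [mul_comm]; exact hX

end FTC





/-- The truncated nonlinearity. -/
noncomputable def gg (R a H : ℝ) (αE βE : ℝ → ℝ) (t z p : ℝ) : ℝ :=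
  αE t * (tr R p + a)^2 * Real.exp (-(tr R z)/H) + βE t

/-- Bound for the truncated nonlinearity. -/
noncomputable def Mb (R a H A Cβ : ℝ) : ℝ := A * Real.exp (R/H) * (R+a)^2 + Cβ

/-- Lipschitz constant for the vector field. -/
noncomputable def Kr (R a H A : ℝ) : ℝ :=
  1 + A * Real.exp (R/H) * (2*(R+a) + (R+a)^2/H)

/-- The vector field of the first-order system, with velocity truncated at level `B`. -/
noncomputable def Fv (B R a H : ℝ) (αE βE : ℝ → ℝ) (t : ℝ) (x : ℝ × ℝ) : ℝ × ℝ :=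
  (tr B x.2, gg R a H αE βE t x.1 x.2)

section ODE

variable {t0 t1 R a H A Cβ B : ℝ} {αE βE : ℝ → ℝ}

lemma g_cont (hαc : Continuous αE) (hβc : Continuous βE) (hH : 0 < H) :
    Continuous (fun q : ℝ × ℝ × ℝ => gg R a H αE βE q.1 q.2.1 q.2.2) := by
  unfold gg
  have := tr_continuous R
  fun_prop

lemma abs_tr_add_le (hR : 0 ≤ R) (ha : 0 ≤ a) (p : ℝ) : |tr R p + a| ≤ R + a := by
  calc |tr R p + a| ≤ |tr R p| + |a| := abs_add_le _ _
    _ ≤ R + a := add_le_add (abs_tr_le hR p) (le_of_eq (abs_of_nonneg ha))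

lemma exp_tr_le (hR : 0 ≤ R) (hH : 0 < H) (z : ℝ) :
    Real.exp (-(tr R z)/H) ≤ Real.exp (R/H) := by
  apply Real.exp_le_exp.2
  apply div_le_div_of_nonneg_right ?_ hH.le
  linarith [abs_le.1 (abs_tr_le hR z)]

lemma gterm_bound (hR : 0 ≤ R) (ha : 0 ≤ a) (hH : 0 < H)
    (hA : ∀ t, |αE t| ≤ A) (t z p : ℝ) :
    |αE t * (tr R p + a)^2 * Real.exp (-(tr R z)/H)|
      ≤ A * Real.exp (R/H) * (R+a)^2 := by
  have hA0 : 0 ≤ A := (abs_nonneg _).trans (hA 0)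
  have h1 : |tr R p + a| ≤ R + a := abs_tr_add_le hR ha p
  have h2 : Real.exp (-(tr R z)/H) ≤ Real.exp (R/H) := exp_tr_le hR hH z
  have h3 : (tr R p + a)^2 ≤ (R + a)^2 := by
    rw [← sq_abs]; exact pow_le_pow_left₀ (abs_nonneg _) h1 2
  rw [abs_mul, abs_mul, abs_of_nonneg (sq_nonneg (tr R p + a)), abs_of_pos (Real.exp_pos _)]
  calc |αE t| * (tr R p + a)^2 * Real.exp (-(tr R z)/H)
      ≤ A * (R+a)^2 * Real.exp (R/H) := by
        apply mul_le_mul (mul_le_mul (hA t) h3 (sq_nonneg _) hA0) h2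
          (Real.exp_pos _).le (by positivity)
    _ = A * Real.exp (R/H) * (R+a)^2 := by ring

lemma g_bound (hR : 0 ≤ R) (ha : 0 ≤ a) (hH : 0 < H)
    (hA : ∀ t, |αE t| ≤ A) (hC : ∀ t, |βE t| ≤ Cβ) (t z p : ℝ) :
    |gg R a H αE βE t z p| ≤ Mb R a H A Cβ := by
  have h4 := gterm_bound hR ha hH hA t z p
  unfold gg Mb
  calc |αE t * (tr R p + a)^2 * Real.exp (-(tr R z)/H) + βE t|
      ≤ |αE t * (tr R p + a)^2 * Real.exp (-(tr R z)/H)| + |βE t| := abs_add_le _ _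
    _ ≤ A * Real.exp (R/H) * (R+a)^2 + Cβ := add_le_add h4 (hC t)

lemma g_lip (hR : 0 ≤ R) (ha : 0 ≤ a) (hH : 0 < H) (hA : ∀ t, |αE t| ≤ A)
    (t z p z' p' : ℝ) :
    |gg R a H αE βE t z p - gg R a H αE βE t z' p'|
      ≤ (Kr R a H A - 1) * max |z - z'| |p - p'| := by
  have hA0 : 0 ≤ A := (abs_nonneg _).trans (hA 0)
  set u := tr R p + a with hu
  set u' := tr R p' + a with hu'
  set e := Real.exp (-(tr R z)/H) with he
  set e' := Real.exp (-(tr R z')/H) with he'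
  set ex := Real.exp (R/H) with hex
  set mx := max |z - z'| |p - p'| with hmx
  have hmx0 : 0 ≤ mx := le_max_iff.2 (Or.inl (abs_nonneg _))
  have hzz : |z - z'| ≤ mx := le_max_left _ _
  have hpp : |p - p'| ≤ mx := le_max_right _ _
  have hue : |u - u'| ≤ |p - p'| := by rw [hu, hu']; simpa using abs_tr_sub_tr p p'
  have huu : |u + u'| ≤ 2*(R+a) := by
    calc |u + u'| ≤ |u| + |u'| := abs_add_le _ _
      _ ≤ (R+a) + (R+a) := add_le_add (abs_tr_add_le hR ha p) (abs_tr_add_le hR ha p')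
      _ = 2*(R+a) := by ring
  have hee : |e - e'| ≤ ex/H * |z - z'| := by
    have k1 : -(tr R z)/H ≤ R/H := by
      apply div_le_div_of_nonneg_right ?_ hH.le
      linarith [abs_le.1 (abs_tr_le hR z)]
    have k2 : -(tr R z')/H ≤ R/H := by
      apply div_le_div_of_nonneg_right ?_ hH.le
      linarith [abs_le.1 (abs_tr_le hR z')]
    calc |e - e'| ≤ ex * |(-(tr R z)/H) - (-(tr R z')/H)| := exp_lip k1 k2
      _ = ex/H * |tr R z - tr R z'| := by
          rw [div_sub_div_same, abs_div, abs_of_pos hH, neg_sub_neg]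
          rw [abs_sub_comm]
          ring
      _ ≤ ex/H * |z - z'| := by
          apply mul_le_mul_of_nonneg_left (abs_tr_sub_tr _ _) (by positivity)
  have he_le : e ≤ ex := exp_tr_le hR hH z
  have he_pos : (0:ℝ) < e := Real.exp_pos _
  have ediff : gg R a H αE βE t z p - gg R a H αE βE t z' p'
      = αE t * ((u^2 - u'^2) * e + u'^2 * (e - e')) := by
    unfold gg; rw [← hu, ← hu', ← he, ← he']; ring
  have husq : |u^2 - u'^2| ≤ 2*(R+a) * |p - p'| := by
    calc |u^2 - u'^2| = |u - u'| * |u + u'| := by rw [← abs_mul]; ring_nf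
      _ ≤ |p - p'| * (2*(R+a)) := by
          apply mul_le_mul hue huu (abs_nonneg _) (abs_nonneg _)
      _ = 2*(R+a) * |p - p'| := mul_comm _ _
  have hu'sq : u'^2 ≤ (R+a)^2 := by
    rw [← sq_abs]; exact pow_le_pow_left₀ (abs_nonneg _) (abs_tr_add_le hR ha p') 2
  calc |gg R a H αE βE t z p - gg R a H αE βE t z' p'|
      = |αE t| * |(u^2 - u'^2) * e + u'^2 * (e - e')| := by rw [ediff, abs_mul]
    _ ≤ A * (|u^2 - u'^2| * e + u'^2 * |e - e'|) := by
        apply mul_le_mul (hA t) ?_ (abs_nonneg _) hA0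
        calc |(u^2 - u'^2) * e + u'^2 * (e - e')|
            ≤ |(u^2 - u'^2) * e| + |u'^2 * (e - e')| := abs_add_le _ _
          _ = |u^2 - u'^2| * e + u'^2 * |e - e'| := by
              rw [abs_mul, abs_mul, abs_of_pos he_pos, abs_of_nonneg (sq_nonneg u')]
    _ ≤ A * ((2*(R+a) * |p - p'|) * ex + (R+a)^2 * (ex/H * |z - z'|)) := by
        apply mul_le_mul_of_nonneg_left ?_ hA0
        apply add_le_add
        · apply mul_le_mul husq he_le he_pos.le (by positivity)
        · apply mul_le_mul hu'sq hee (abs_nonneg _) (by positivity)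
    _ ≤ A * ((2*(R+a) * mx) * ex + (R+a)^2 * (ex/H * mx)) := by
        gcongr <;> positivity
    _ = (Kr R a H A - 1) * mx := by
        unfold Kr; rw [← hex]; field_simp; ring

lemma Kr_ge_one (hA0 : 0 ≤ A) (hR : 0 ≤ R) (ha : 0 ≤ a) (hH : 0 < H) :
    1 ≤ Kr R a H A := by
  unfold Kr
  have : 0 ≤ A * Real.exp (R/H) * (2*(R+a) + (R+a)^2/H) := by positivity
  linarith

lemma F_lip (hR : 0 ≤ R) (ha : 0 ≤ a) (hH : 0 < H) (hA : ∀ t, |αE t| ≤ A) (t : ℝ) :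
    LipschitzWith (Real.toNNReal (Kr R a H A)) (Fv B R a H αE βE t) := by
  have hA0 : 0 ≤ A := (abs_nonneg _).trans (hA 0)
  have hK1 : 1 ≤ Kr R a H A := Kr_ge_one hA0 hR ha hH
  apply LipschitzWith.of_dist_le_mul
  intro x y
  rw [Real.coe_toNNReal _ (le_trans zero_le_one hK1), Prod.dist_eq,
    Real.dist_eq, Real.dist_eq, Prod.dist_eq, Real.dist_eq, Real.dist_eq]
  set mx := max |x.1 - y.1| |x.2 - y.2| with hmx
  have hmx0 : 0 ≤ mx := le_max_iff.2 (Or.inl (abs_nonneg _))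
  apply max_le
  · calc |(Fv B R a H αE βE t x).1 - (Fv B R a H αE βE t y).1|
        = |tr B x.2 - tr B y.2| := rfl
      _ ≤ |x.2 - y.2| := abs_tr_sub_tr _ _
      _ ≤ mx := le_max_right _ _
      _ ≤ Kr R a H A * mx := le_mul_of_one_le_left hmx0 hK1
  · calc |(Fv B R a H αE βE t x).2 - (Fv B R a H αE βE t y).2|
        = |gg R a H αE βE t x.1 x.2 - gg R a H αE βE t y.1 y.2| := rfl
      _ ≤ (Kr R a H A - 1) * mx := g_lip hR ha hH hA t _ _ _ _
      _ ≤ Kr R a H A * mx := mul_le_mul_of_nonneg_right (by linarith) hmx0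

lemma exists_sol (ht : t0 < t1) (hR : 0 ≤ R) (ha : 0 ≤ a) (hH : 0 < H)
    (hαc : Continuous αE) (hβc : Continuous βE)
    (hA : ∀ t, |αE t| ≤ A) (hC : ∀ t, |βE t| ≤ Cβ) (hB : 0 ≤ B) (c : ℝ) :
    ∃ f : ℝ → ℝ × ℝ, f t0 = (0, c) ∧ ∀ t ∈ Icc t0 t1,
      HasDerivWithinAt f (Fv B R a H αE βE t (f t)) (Icc t0 t1) t := by
  have hA0 : 0 ≤ A := (abs_nonneg _).trans (hA 0)
  set C0 : ℝ := max B (Mb R a H A Cβ) with hC0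
  have hC00 : 0 ≤ C0 := le_trans hB (le_max_left _ _)
  have hCd : 0 ≤ C0 * (t1 - t0) := mul_nonneg hC00 (by linarith)
  have hpl : IsPicardLindelof (Fv B R a H αE βE) (tmin := t0) (tmax := t1)
      ⟨t0, ⟨le_rfl, ht.le⟩⟩ ((0 : ℝ), c)
      (Real.toNNReal (C0 * (t1 - t0))) 0 (Real.toNNReal C0) (Real.toNNReal (Kr R a H A)) := by
    constructor
    · exact fun t _ => (F_lip hR ha hH hA t).lipschitzOnWith
    · intro x _
      apply Continuous.continuousOn
      unfold Fv gg
      fun_prop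
    · intro t _ x _
      rw [Prod.norm_def, Real.coe_toNNReal _ hC00]
      apply max_le
      · rw [Real.norm_eq_abs]
        exact le_trans (abs_tr_le hB _) (le_max_left _ _)
      · rw [Real.norm_eq_abs]
        exact le_trans (g_bound hR ha hH hA hC t x.1 x.2) (le_max_right _ _)
    · have h1 : max (t1 - t0) (t0 - t0) = t1 - t0 := by
        apply max_eq_left; linarith
      simp only [NNReal.coe_zero, sub_zero, Real.coe_toNNReal _ hC00, Real.coe_toNNReal _ hCd]
      rw [h1]
  exact hpl.exists_eq_forall_mem_Icc_hasDerivWithinAt₀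

/-- Properties of a solution of the truncated system. -/
lemma sol_props (ht : t0 < t1) (hR : 0 ≤ R) (ha : 0 ≤ a) (hH : 0 < H)
    (hαc : Continuous αE) (hβc : Continuous βE)
    (hA : ∀ t, |αE t| ≤ A) (hC : ∀ t, |βE t| ≤ Cβ)
    {c C1 : ℝ} (hc : |c| ≤ C1)
    {f : ℝ → ℝ × ℝ} (hf0 : f t0 = (0, c))
    (hf : ∀ t ∈ Icc t0 t1, HasDerivWithinAt f
      (Fv (C1 + Mb R a H A Cβ * (t1 - t0)) R a H αE βE t (f t)) (Icc t0 t1) t) :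
    (∀ t ∈ Icc t0 t1, HasDerivWithinAt (fun u => (f u).1) ((f t).2) (Icc t0 t1) t) ∧
    (∀ t ∈ Icc t0 t1, HasDerivWithinAt (fun u => (f u).2)
        (gg R a H αE βE t (f t).1 (f t).2) (Icc t0 t1) t) ∧
    (∀ t ∈ Icc t0 t1, |(f t).2 - c| ≤ Mb R a H A Cβ * (t1 - t0)) ∧
    (∀ t ∈ Icc t0 t1, (f t).1 = ∫ s in t0..t, (f s).2) := by
  set M := Mb R a H A Cβ with hM
  have hM0 : 0 ≤ M := le_trans (abs_nonneg _) (g_bound hR ha hH hA hC 0 0 0)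
  set B := C1 + M * (t1 - t0) with hB
  have hC10 : 0 ≤ C1 := le_trans (abs_nonneg _) hc
  have hB0 : 0 ≤ B := by
    have : 0 ≤ t1 - t0 := by linarith
    positivity
  have hfc : ContinuousOn f (Icc t0 t1) := fun s hs => (hf s hs).continuousWithinAt
  have hf1c : ContinuousOn (fun u => (f u).1) (Icc t0 t1) := continuous_fst.comp_continuousOn hfc
  have hf2c : ContinuousOn (fun u => (f u).2) (Icc t0 t1) := continuous_snd.comp_continuousOn hfc
  -- second component derivative
  have hp : ∀ t ∈ Icc t0 t1, HasDerivWithinAt (fun u => (f u).2)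
      (gg R a H αE βE t (f t).1 (f t).2) (Icc t0 t1) t := by
    intro t htm
    exact (ContinuousLinearMap.snd ℝ ℝ ℝ).hasFDerivAt.comp_hasDerivWithinAt t (hf t htm)
  have hgc : ContinuousOn (fun s => gg R a H αE βE s (f s).1 (f s).2) (Icc t0 t1) := by
    have := g_cont (R := R) (a := a) hαc hβc hH
    exact this.comp_continuousOn (continuousOn_id.prodMk (hf1c.prodMk hf2c))
  -- a priori bound on second component
  have hpb : ∀ t ∈ Icc t0 t1, |(f t).2 - c| ≤ M * (t1 - t0) := by
    intro t htm
    have heval := ftc_eval ht hp hgc htm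
    have h2 : (f t0).2 = c := by rw [hf0]
    rw [h2] at heval
    have hint := abs_int_le ht hgc (fun s hs => g_bound hR ha hH hA hC s _ _) htm
    have : M * (t - t0) ≤ M * (t1 - t0) :=
      mul_le_mul_of_nonneg_left (by linarith [htm.2]) hM0
    rw [heval]
    calc |c + (∫ s in t0..t, gg R a H αE βE s (f s).1 (f s).2) - c|
        = |∫ s in t0..t, gg R a H αE βE s (f s).1 (f s).2| := by ring_nf
      _ ≤ M * (t - t0) := hint
      _ ≤ M * (t1 - t0) := this
  -- hence truncation at level B is inactive
  have htr : ∀ t ∈ Icc t0 t1, tr B ((f t).2) = (f t).2 := by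
    intro t htm
    apply tr_eq_of_abs_le
    calc |(f t).2| = |c + ((f t).2 - c)| := by ring_nf
      _ ≤ |c| + |(f t).2 - c| := abs_add_le _ _
      _ ≤ C1 + M * (t1 - t0) := add_le_add hc (hpb t htm)
  -- first component derivative
  have hz : ∀ t ∈ Icc t0 t1, HasDerivWithinAt (fun u => (f u).1) ((f t).2) (Icc t0 t1) t := by
    intro t htm
    have h1 : HasDerivWithinAt (fun u => (f u).1) (tr B ((f t).2)) (Icc t0 t1) t :=
      (ContinuousLinearMap.fst ℝ ℝ ℝ).hasFDerivAt.comp_hasDerivWithinAt t (hf t htm)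
    rwa [htr t htm] at h1
  refine ⟨hz, hp, hpb, ?_⟩
  intro t htm
  have heval := ftc_eval ht hz hf2c htm
  have h1 : (f t0).1 = 0 := by rw [hf0]
  rw [h1, zero_add] at heval
  exact heval

lemma sol_dist (ht : t0 < t1) (hR : 0 ≤ R) (ha : 0 ≤ a) (hH : 0 < H)
    (hA : ∀ t, |αE t| ≤ A) {f g' : ℝ → ℝ × ℝ}
    (hf : ∀ t ∈ Icc t0 t1, HasDerivWithinAt f (Fv B R a H αE βE t (f t)) (Icc t0 t1) t)
    (hg : ∀ t ∈ Icc t0 t1, HasDerivWithinAt g' (Fv B R a H αE βE t (g' t)) (Icc t0 t1) t) :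
    dist (f t1) (g' t1)
      ≤ dist (f t0) (g' t0) * Real.exp (Kr R a H A * (t1 - t0)) := by
  have hA0 : 0 ≤ A := (abs_nonneg _).trans (hA 0)
  have conv : ∀ (h : ℝ → ℝ × ℝ),
      (∀ t ∈ Icc t0 t1, HasDerivWithinAt h (Fv B R a H αE βE t (h t)) (Icc t0 t1) t) →
      ∀ t ∈ Ico t0 t1, HasDerivWithinAt h (Fv B R a H αE βE t (h t)) (Ici t) t := by
    intro h hh t htm
    exact (hh t (Ico_subset_Icc_self htm)).mono_of_mem_nhdsWithin
      (Icc_mem_nhdsGE_of_mem htm)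
  have key := dist_le_of_trajectories_ODE (v := Fv B R a H αE βE)
    (K := Real.toNNReal (Kr R a H A)) (fun t => F_lip hR ha hH hA t)
    (fun s hs => (hf s hs).continuousWithinAt) (conv f hf)
    (fun s hs => (hg s hs).continuousWithinAt) (conv g' hg)
    le_rfl t1 ⟨ht.le, le_rfl⟩
  rwa [Real.coe_toNNReal _ (le_trans zero_le_one (Kr_ge_one hA0 hR ha hH))] at key

lemma shooting (ht : t0 < t1) (hR : 0 ≤ R) (ha : 0 ≤ a) (hH : 0 < H)
    (hαc : Continuous αE) (hβc : Continuous βE)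
    (hA : ∀ t, |αE t| ≤ A) (hC : ∀ t, |βE t| ≤ Cβ) :
    ∃ f : ℝ → ℝ × ℝ, (f t0).1 = 0 ∧ (f t1).1 = 0 ∧
      (∀ t ∈ Icc t0 t1, HasDerivWithinAt (fun u => (f u).1) ((f t).2) (Icc t0 t1) t) ∧
      (∀ t ∈ Icc t0 t1, HasDerivWithinAt (fun u => (f u).2)
          (gg R a H αE βE t (f t).1 (f t).2) (Icc t0 t1) t) := by
  set M := Mb R a H A Cβ with hM
  have hM0 : 0 ≤ M := le_trans (abs_nonneg _) (g_bound hR ha hH hA hC 0 0 0)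
  have hd0 : 0 ≤ t1 - t0 := by linarith
  set C1 : ℝ := M * (t1 - t0) + 1 with hC1
  have hC10 : 0 < C1 := by positivity
  set B : ℝ := C1 + M * (t1 - t0) with hB
  have hB0 : 0 ≤ B := by positivity
  have hex := fun c => exists_sol (B := B) ht hR ha hH hαc hβc hA hC hB0 c
  choose sol hsol0 hsolD using hex
  set φ : ℝ → ℝ := fun c => (sol c t1).1 with hφ
  -- Lipschitz continuity of φ
  have hφcont : Continuous φ := by
    have : LipschitzWith (Real.toNNReal (Real.exp (Kr R a H A * (t1 - t0)))) φ := by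
      apply LipschitzWith.of_dist_le_mul
      intro c c'
      rw [Real.coe_toNNReal _ (Real.exp_pos _).le]
      have key := sol_dist ht hR ha hH hA (hsolD c) (hsolD c')
      rw [hsol0 c, hsol0 c'] at key
      have h1 : dist ((0:ℝ), c) ((0:ℝ), c') = dist c c' := by
        rw [Prod.dist_eq]
        simp [dist_nonneg]
      rw [h1] at key
      calc dist (φ c) (φ c') ≤ dist (sol c t1) (sol c' t1) := by
            rw [Prod.dist_eq, hφ]
            exact le_max_left _ _
        _ ≤ dist c c' * Real.exp (Kr R a H A * (t1 - t0)) := key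
        _ = Real.exp (Kr R a H A * (t1 - t0)) * dist c c' := mul_comm _ _
    exact this.continuous
  -- sign of φ at the endpoints
  have hsign : ∀ c : ℝ, |c| ≤ C1 →
      (∀ s ∈ Icc t0 t1, |(sol c s).2 - c| ≤ M * (t1 - t0)) ∧
      (sol c t1).1 = ∫ s in t0..t1, (sol c s).2 := by
    intro c hc
    obtain ⟨_, _, h3, h4⟩ := sol_props ht hR ha hH hαc hβc hA hC hc (hsol0 c) (hsolD c)
    exact ⟨h3, h4 t1 ⟨ht.le, le_rfl⟩⟩
  have hint_cont : ∀ c : ℝ, ContinuousOn (fun s => (sol c s).2) (Icc t0 t1) := by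
    intro c
    exact continuous_snd.comp_continuousOn
      (fun s hs => ((hsolD c) s hs).continuousWithinAt)
  have hub : φ (-C1) ≤ 0 := by
    obtain ⟨h3, h4⟩ := hsign (-C1) (by rw [abs_neg, abs_of_pos hC10])
    have hple : ∀ s ∈ Icc t0 t1, (sol (-C1) s).2 ≤ -1 := by
      intro s hs
      have := abs_le.1 (h3 s hs)
      simp only [hC1] at *
      linarith [this.2]
    have : (∫ s in t0..t1, (sol (-C1) s).2) ≤ ∫ _ in t0..t1, (-1 : ℝ) := by
      apply integral_mono_on ht.le (ContinuousOn.intervalIntegrable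
        (by rw [uIcc_of_le ht.le]; exact hint_cont _)) intervalIntegrable_const hple
    rw [intervalIntegral.integral_const, smul_eq_mul] at this
    rw [hφ]
    simp only
    rw [h4]
    nlinarith
  have hlb : 0 ≤ φ C1 := by
    obtain ⟨h3, h4⟩ := hsign C1 (by rw [abs_of_pos hC10])
    have hpge : ∀ s ∈ Icc t0 t1, (1:ℝ) ≤ (sol C1 s).2 := by
      intro s hs
      have := abs_le.1 (h3 s hs)
      simp only [hC1] at *
      linarith [this.1]
    have : (∫ _ in t0..t1, (1:ℝ)) ≤ ∫ s in t0..t1, (sol C1 s).2 := by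
      apply integral_mono_on ht.le intervalIntegrable_const (ContinuousOn.intervalIntegrable
        (by rw [uIcc_of_le ht.le]; exact hint_cont _)) hpge
    rw [intervalIntegral.integral_const, smul_eq_mul] at this
    rw [hφ]
    simp only
    rw [h4]
    nlinarith
  -- intermediate value theorem
  have hivt := intermediate_value_Icc (by linarith : -C1 ≤ C1) hφcont.continuousOn
  have h0mem : (0:ℝ) ∈ Icc (φ (-C1)) (φ C1) := ⟨hub, hlb⟩
  obtain ⟨c, hcmem, hc0⟩ := hivt h0mem
  have hcabs : |c| ≤ C1 := abs_le.2 ⟨hcmem.1, hcmem.2⟩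
  obtain ⟨h1, h2, _, _⟩ := sol_props ht hR ha hH hαc hβc hA hC hcabs (hsol0 c) (hsolD c)
  refine ⟨sol c, by rw [hsol0 c], hc0, h1, h2⟩

end ODE



section BD
set_option linter.unusedSectionVars false
variable {t0 t1 : ℝ} (ht : t0 < t1)


/-- explicit antiderivative-style expression for the Green integral operator -/
noncomputable def btil (t0 t1 : ℝ) (βE : ℝ → ℝ) (t : ℝ) : ℝ :=
  -(((t1 - t)/(t1 - t0)) * (∫ s in t0..t, (s - t0) * βE s)
    + ((t - t0)/(t1 - t0)) * (∫ s in t..t1, (t1 - s) * βE s))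

lemma btil_hasDeriv {βE : ℝ → ℝ} (hβE : Continuous βE) (t : ℝ) :
    HasDerivAt (btil t0 t1 βE)
      (((∫ s in t0..t, (s - t0) * βE s) - ∫ s in t..t1, (t1 - s) * βE s)/(t1 - t0)) t := by
  have hc1 : Continuous (fun s => (s - t0) * βE s) := by fun_prop
  have hc2 : Continuous (fun s => (t1 - s) * βE s) := by fun_prop
  have hI1 : HasDerivAt (fun u => ∫ s in t0..u, (s - t0) * βE s) ((t - t0) * βE t) t :=
    intervalIntegral.integral_hasDerivAt_right (hc1.intervalIntegrable _ _)
      (hc1.stronglyMeasurableAtFilter _ _) hc1.continuousAt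
  have hJ : HasDerivAt (fun u => ∫ s in t0..u, (t1 - s) * βE s) ((t1 - t) * βE t) t :=
    intervalIntegral.integral_hasDerivAt_right (hc2.intervalIntegrable _ _)
      (hc2.stronglyMeasurableAtFilter _ _) hc2.continuousAt
  have hI2eq : ∀ u : ℝ, (∫ s in u..t1, (t1 - s) * βE s)
      = (∫ s in t0..t1, (t1 - s) * βE s) - ∫ s in t0..u, (t1 - s) * βE s := by
    intro u
    rw [← integral_add_adjacent_intervals (hc2.intervalIntegrable t0 u)
      (hc2.intervalIntegrable u t1)]
    ring
  have hI2 : HasDerivAt (fun u => ∫ s in u..t1, (t1 - s) * βE s) (-((t1 - t) * βE t)) t := by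
    have := (hasDerivAt_const t (∫ s in t0..t1, (t1 - s) * βE s)).sub hJ
    rw [zero_sub] at this
    exact this.congr_of_eventuallyEq (Filter.Eventually.of_forall fun u => hI2eq u)
  have hg1 : HasDerivAt (fun u : ℝ => (t1 - u)/(t1 - t0)) (-(1/(t1 - t0))) t := by
    simpa [neg_div] using ((hasDerivAt_id t).const_sub t1).div_const (t1 - t0)
  have hg2 : HasDerivAt (fun u : ℝ => (u - t0)/(t1 - t0)) (1/(t1 - t0)) t := by
    simpa using ((hasDerivAt_id t).sub_const t0).div_const (t1 - t0)
  have key := ((hg1.mul hI1).add (hg2.mul hI2)).neg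
  unfold btil
  exact key.congr_deriv (by ring)

include ht in
lemma wint_bound_left {f : ℝ → ℝ} (hf : ContinuousOn f (Icc t0 t1)) {X : ℝ}
    (hX : ∀ s ∈ Icc t0 t1, |f s| ≤ X) {t : ℝ} (htm : t ∈ Icc t0 t1) :
    |∫ s in t0..t, (s - t0) * f s| ≤ X * (t - t0)^2/2 := by
  have hsub : Icc t0 t ⊆ Icc t0 t1 := Icc_subset_Icc le_rfl htm.2
  have hii := q_ii_left ht hf htm
  calc |∫ s in t0..t, (s - t0) * f s| ≤ ∫ s in t0..t, |(s - t0) * f s| :=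
        abs_integral_le_integral_abs htm.1
    _ ≤ ∫ s in t0..t, (s - t0) * X := by
        apply integral_mono_on htm.1 hii.abs
          (ContinuousOn.intervalIntegrable (by fun_prop))
        intro x hx
        rw [abs_mul, abs_of_nonneg (by linarith [hx.1] : (0:ℝ) ≤ x - t0)]
        exact mul_le_mul_of_nonneg_left (hX x (hsub hx)) (by linarith [hx.1])
    _ = X * (t - t0)^2/2 := by
        rw [show (fun s => (s - t0) * X) = fun s => X * (s - t0) by funext s; ring] at *
        rw [intervalIntegral.integral_const_mul, int_id_sub]
        ring

include ht in
lemma wint_bound_right {f : ℝ → ℝ} (hf : ContinuousOn f (Icc t0 t1)) {X : ℝ}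
    (hX : ∀ s ∈ Icc t0 t1, |f s| ≤ X) {t : ℝ} (htm : t ∈ Icc t0 t1) :
    |∫ s in t..t1, (t1 - s) * f s| ≤ X * (t1 - t)^2/2 := by
  have hsub : Icc t t1 ⊆ Icc t0 t1 := Icc_subset_Icc htm.1 le_rfl
  have hii := q_ii_right ht hf htm
  calc |∫ s in t..t1, (t1 - s) * f s| ≤ ∫ s in t..t1, |(t1 - s) * f s| :=
        abs_integral_le_integral_abs htm.2
    _ ≤ ∫ s in t..t1, (t1 - s) * X := by
        apply integral_mono_on htm.2 hii.abs
          (ContinuousOn.intervalIntegrable (by fun_prop))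
        intro x hx
        rw [abs_mul, abs_of_nonneg (by linarith [hx.2] : (0:ℝ) ≤ t1 - x)]
        exact mul_le_mul_of_nonneg_left (hX x (hsub hx)) (by linarith [hx.2])
    _ = X * (t1 - t)^2/2 := by
        rw [show (fun s => (t1 - s) * X) = fun s => X * (t1 - s) by funext s; ring] at *
        rw [intervalIntegral.integral_const_mul, int_const_sub]
        ring

end BD

lemma comb_bound {c1 c2 I1 I2 X1 X2 : ℝ} (h1 : |I1| ≤ X1) (h2 : |I2| ≤ X2)
    (hc1 : 0 ≤ c1) (hc2 : 0 ≤ c2) : |-(c1 * I1 + c2 * I2)| ≤ c1 * X1 + c2 * X2 := by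
  rw [abs_neg]
  calc |c1 * I1 + c2 * I2| ≤ |c1 * I1| + |c2 * I2| := abs_add_le _ _
    _ = c1 * |I1| + c2 * |I2| := by
        rw [abs_mul, abs_mul, abs_of_nonneg hc1, abs_of_nonneg hc2]
    _ ≤ c1 * X1 + c2 * X2 :=
        add_le_add (mul_le_mul_of_nonneg_left h1 hc1) (mul_le_mul_of_nonneg_left h2 hc2)

end BVPAux

set_option maxHeartbeats 2000000 in
open BVPAux in
/-- Main existence theorem (via the Schauder fixed point theorem): if there is `R > 0`
with `max{G₀, G₁} · sup|α| · e^{R/H} (R + a)² + max{sup|b|, sup|b'|} ≤ R`, then the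
boundary value problem `z̈ = α(t) (ż + a)² exp(-z/H) + β(t)`, `z(t₀) = z(t₁) = 0`,
admits at least one `C²` solution with `max{sup|z|, sup|ż|} ≤ R`. -/
theorem main_existence (t0 t1 : ℝ) (ht : t0 < t1)
    (α β : ℝ → ℝ)
    (hα : ContinuousOn α (Icc t0 t1)) (hβ : ContinuousOn β (Icc t0 t1))
    (a H : ℝ) (ha : 0 ≤ a) (hH : 0 < H)
    (b b' : ℝ → ℝ)
    (hb : ∀ t, b t = -∫ s in t0..t1, Green t0 t1 t s * β s)
    (hb' : ∀ t ∈ Icc t0 t1, HasDerivWithinAt b (b' t) (Icc t0 t1) t)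
    (G0 G1 : ℝ)
    (hG0 : G0 = sSup ((fun t => ∫ s in t0..t1, Green t0 t1 t s) '' Icc t0 t1))
    (hG1 : G1 = sSup
      ((fun t => ∫ s in t0..t1, |deriv (fun u => Green t0 t1 u s) t|) '' Icc t0 t1))
    (R : ℝ) (hR : 0 < R)
    (hinv : max G0 G1 * sSup ((fun t => |α t|) '' Icc t0 t1) * Real.exp (R / H) *
          (R + a) ^ 2 +
        max (sSup ((fun t => |b t|) '' Icc t0 t1))
          (sSup ((fun t => |b' t|) '' Icc t0 t1)) ≤ R) :
    ∃ z z' z'' : ℝ → ℝ,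
      (∀ t ∈ Icc t0 t1, HasDerivWithinAt z (z' t) (Icc t0 t1) t) ∧
      (∀ t ∈ Icc t0 t1, HasDerivWithinAt z' (z'' t) (Icc t0 t1) t) ∧
      ContinuousOn z'' (Icc t0 t1) ∧
      (∀ t ∈ Icc t0 t1,
        z'' t = α t * (z' t + a) ^ 2 * Real.exp (-(z t) / H) + β t) ∧
      z t0 = 0 ∧ z t1 = 0 ∧
      (∀ t ∈ Icc t0 t1, |z t| ≤ R ∧ |z' t| ≤ R) := by
  classical
  have hd : (0:ℝ) < t1 - t0 := by linarith
  -- continuous extensions of α and β to all of ℝ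
  set αE : ℝ → ℝ := Set.IccExtend ht.le ((Icc t0 t1).restrict α) with hαEdef
  set βE : ℝ → ℝ := Set.IccExtend ht.le ((Icc t0 t1).restrict β) with hβEdef
  have hαEc : Continuous αE := (continuousOn_iff_continuous_restrict.mp hα).Icc_extend'
  have hβEc : Continuous βE := (continuousOn_iff_continuous_restrict.mp hβ).Icc_extend'
  have hαEeq : ∀ s ∈ Icc t0 t1, αE s = α s := fun s hs => Set.IccExtend_of_mem ht.le _ hs
  have hβEeq : ∀ s ∈ Icc t0 t1, βE s = β s := fun s hs => Set.IccExtend_of_mem ht.le _ hs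
  -- sup of |α|
  set A := sSup ((fun t => |α t|) '' Icc t0 t1) with hA
  have hAbdd : BddAbove ((fun t => |α t|) '' Icc t0 t1) :=
    (isCompact_Icc.image_of_continuousOn hα.abs).bddAbove
  have hAle : ∀ s ∈ Icc t0 t1, |α s| ≤ A := fun s hs => le_csSup hAbdd (mem_image_of_mem _ hs)
  have hAE : ∀ u, |αE u| ≤ A := by
    intro u
    rw [hαEdef, Set.IccExtend_apply]
    exact hAle _ (Set.projIcc t0 t1 ht.le u).2
  have hA0 : 0 ≤ A := le_trans (abs_nonneg _) (hAle t0 ⟨le_rfl, ht.le⟩)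
  -- sup of |β|
  set Cβ := sSup ((fun t => |β t|) '' Icc t0 t1) with hCβ
  have hCβbdd : BddAbove ((fun t => |β t|) '' Icc t0 t1) :=
    (isCompact_Icc.image_of_continuousOn hβ.abs).bddAbove
  have hCβle : ∀ s ∈ Icc t0 t1, |β s| ≤ Cβ := fun s hs => le_csSup hCβbdd (mem_image_of_mem _ hs)
  have hCβE : ∀ u, |βE u| ≤ Cβ := by
    intro u
    rw [hβEdef, Set.IccExtend_apply]
    exact hCβle _ (Set.projIcc t0 t1 ht.le u).2
  have hCβ0 : 0 ≤ Cβ := le_trans (abs_nonneg _) (hCβle t0 ⟨le_rfl, ht.le⟩)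
  -- the shooting solution of the truncated problem
  obtain ⟨f, hf0, hf1, hzd, hpd⟩ :=
    shooting (R := R) (a := a) (H := H) ht hR.le ha hH hαEc hβEc hAE hCβE
  have hZc : ContinuousOn (fun u => (f u).1) (Icc t0 t1) :=
    fun s hs => ((hzd s hs).continuousWithinAt)
  have hPc : ContinuousOn (fun u => (f u).2) (Icc t0 t1) :=
    fun s hs => ((hpd s hs).continuousWithinAt)
  -- the α-part of the nonlinearity and the full nonlinearity along the solution
  set X := A * Real.exp (R/H) * (R + a)^2 with hX
  have hX0 : 0 ≤ X := by rw [hX]; positivity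
  set w : ℝ → ℝ := fun s => αE s * (tr R ((f s).2) + a)^2 * Real.exp (-(tr R ((f s).1))/H)
    with hwdef
  have htrZ : ContinuousOn (fun s => tr R ((f s).1)) (Icc t0 t1) :=
    (tr_continuous R).comp_continuousOn hZc
  have htrP : ContinuousOn (fun s => tr R ((f s).2)) (Icc t0 t1) :=
    (tr_continuous R).comp_continuousOn hPc
  have hwc : ContinuousOn w (Icc t0 t1) := by
    apply ContinuousOn.mul
    · exact (hαEc.continuousOn).mul ((htrP.add continuousOn_const).pow 2)
    · exact Real.continuous_exp.comp_continuousOn ((htrZ.neg).div_const H)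
  have hwb : ∀ s ∈ Icc t0 t1, |w s| ≤ X :=
    fun s _ => gterm_bound hR.le ha hH hAE s ((f s).1) ((f s).2)
  set q : ℝ → ℝ := fun s => gg R a H αE βE s ((f s).1) ((f s).2) with hqdef
  have hqw : ∀ s, q s = w s + βE s := fun s => rfl
  have hqc : ContinuousOn q (Icc t0 t1) := hwc.add hβEc.continuousOn
  -- b agrees with the explicit expression btil on Icc
  have hbeq : ∀ u ∈ Icc t0 t1, b u = btil t0 t1 βE u := by
    intro u hu
    have hcg : ∫ s in t0..t1, Green t0 t1 u s * β s = ∫ s in t0..t1, Green t0 t1 u s * βE s := by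
      apply intervalIntegral.integral_congr
      intro s hs
      rw [uIcc_of_le ht.le] at hs
      show Green t0 t1 u s * β s = Green t0 t1 u s * βE s
      rw [hβEeq s hs]
    rw [hb u, hcg, green_int ht hβEc.continuousOn hu]
    unfold btil
    ring
  have hb'eq : ∀ u ∈ Icc t0 t1, b' u
      = ((∫ s in t0..u, (s - t0) * βE s) - ∫ s in u..t1, (t1 - s) * βE s)/(t1 - t0) := by
    intro u hu
    have h1 : HasDerivWithinAt (btil t0 t1 βE) (b' u) (Icc t0 t1) u :=
      (hb' u hu).congr (fun y hy => (hbeq y hy).symm) ((hbeq u hu).symm)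
    have h2 := (btil_hasDeriv (t0 := t0) (t1 := t1) hβEc u).hasDerivWithinAt (s := Icc t0 t1)
    exact UniqueDiffWithinAt.eq_deriv _ (uniqueDiffOn_Icc ht u hu) h1 h2
  -- bounds on b and b' over Icc, and the sup constants
  set Sb := sSup ((fun t => |b t|) '' Icc t0 t1) with hSb
  set Sb' := sSup ((fun t => |b' t|) '' Icc t0 t1) with hSb'
  have hβEb : ∀ s ∈ Icc t0 t1, |βE s| ≤ Cβ := fun s _ => hCβE s
  have hbub : ∀ u ∈ Icc t0 t1, |b u| ≤ Cβ * (t1 - t0)^2 := by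
    intro u hu
    rw [hbeq u hu]
    unfold btil
    have e1 := wint_bound_left ht hβEc.continuousOn hβEb hu
    have e2 := wint_bound_right ht hβEc.continuousOn hβEb hu
    have hc1 : 0 ≤ (t1 - u)/(t1 - t0) := div_nonneg (by linarith [hu.2]) hd.le
    have hc2 : 0 ≤ (u - t0)/(t1 - t0) := div_nonneg (by linarith [hu.1]) hd.le
    have key := comb_bound e1 e2 hc1 hc2
    have heq : (t1 - u)/(t1 - t0) * (Cβ * (u - t0)^2/2)
        + (u - t0)/(t1 - t0) * (Cβ * (t1 - u)^2/2) = Cβ * ((u - t0) * (t1 - u))/2 := by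
      field_simp
      ring
    rw [heq] at key
    have h5 : (u - t0) * (t1 - u) ≤ (t1 - t0)^2 := by nlinarith [hu.1, hu.2]
    have h6 : Cβ * ((u - t0) * (t1 - u)) ≤ Cβ * (t1 - t0)^2 :=
      mul_le_mul_of_nonneg_left h5 hCβ0
    calc |-(((t1 - u)/(t1 - t0)) * (∫ s in t0..u, (s - t0) * βE s)
          + ((u - t0)/(t1 - t0)) * (∫ s in u..t1, (t1 - s) * βE s))|
        ≤ Cβ * ((u - t0) * (t1 - u))/2 := key
      _ ≤ Cβ * (t1 - t0)^2 := by
          have h8 : 0 ≤ Cβ * (t1 - t0)^2 := by positivity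
          linarith
  have hSbB : BddAbove ((fun t => |b t|) '' Icc t0 t1) := by
    refine ⟨Cβ * (t1 - t0)^2, ?_⟩
    rintro y ⟨u, hu, rfl⟩
    exact hbub u hu
  have hble : ∀ u ∈ Icc t0 t1, |b u| ≤ Sb :=
    fun u hu => le_csSup hSbB (mem_image_of_mem _ hu)
  have hb'ub : ∀ u ∈ Icc t0 t1, |b' u| ≤ Cβ * (t1 - t0) := by
    intro u hu
    rw [hb'eq u hu, abs_div, abs_of_pos hd]
    have e1 := wint_bound_left ht hβEc.continuousOn hβEb hu
    have e2 := wint_bound_right ht hβEc.continuousOn hβEb hu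
    have h5 : |(∫ s in t0..u, (s - t0) * βE s) - ∫ s in u..t1, (t1 - s) * βE s|
        ≤ Cβ * (t1 - t0)^2 := by
      have tri : |(∫ s in t0..u, (s - t0) * βE s) - ∫ s in u..t1, (t1 - s) * βE s|
          ≤ |∫ s in t0..u, (s - t0) * βE s| + |∫ s in u..t1, (t1 - s) * βE s| := by
        rw [sub_eq_add_neg]
        exact (abs_add_le _ _).trans (by rw [abs_neg])
      have h6 : Cβ * (u - t0)^2/2 + Cβ * (t1 - u)^2/2 ≤ Cβ * (t1 - t0)^2 := by
        nlinarith [hu.1, hu.2, mul_le_mul_of_nonneg_left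
          (by nlinarith [hu.1, hu.2] : (u - t0)^2 + (t1 - u)^2 ≤ 2 * (t1 - t0)^2) hCβ0]
      linarith [tri, e1, e2]
    calc |(∫ s in t0..u, (s - t0) * βE s) - ∫ s in u..t1, (t1 - s) * βE s| / (t1 - t0)
        ≤ (Cβ * (t1 - t0)^2) / (t1 - t0) := div_le_div_of_nonneg_right h5 hd.le
      _ = Cβ * (t1 - t0) := by field_simp
  have hSb'B : BddAbove ((fun t => |b' t|) '' Icc t0 t1) := by
    refine ⟨Cβ * (t1 - t0), ?_⟩
    rintro y ⟨u, hu, rfl⟩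
    exact hb'ub u hu
  have hb'le : ∀ u ∈ Icc t0 t1, |b' u| ≤ Sb' :=
    fun u hu => le_csSup hSb'B (mem_image_of_mem _ hu)
  -- explicit values of the Green-integral sup quantities
  have hWint : ∀ u ∈ Icc t0 t1,
      (∫ s in t0..t1, Green t0 t1 u s) = (u - t0) * (t1 - u)/2 := by
    intro u hu
    have h0 : (∫ s in t0..t1, Green t0 t1 u s)
        = ∫ s in t0..t1, Green t0 t1 u s * (fun _ : ℝ => (1:ℝ)) s := by simp
    rw [h0, green_int (q := fun _ => (1:ℝ)) ht continuousOn_const hu]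
    simp only [mul_one]
    rw [int_id_sub, int_const_sub]
    field_simp
    ring
  have hG0B : BddAbove ((fun t => ∫ s in t0..t1, Green t0 t1 t s) '' Icc t0 t1) := by
    refine ⟨(t1 - t0)^2, ?_⟩
    rintro y ⟨u, hu, rfl⟩
    show (∫ s in t0..t1, Green t0 t1 u s) ≤ (t1 - t0)^2
    rw [hWint u hu]
    nlinarith [hu.1, hu.2]
  have hG0ge : ∀ u ∈ Icc t0 t1, (u - t0) * (t1 - u)/2 ≤ G0 := by
    intro u hu
    rw [hG0]
    exact le_csSup hG0B ⟨u, hu, hWint u hu⟩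
  have hQint : ∀ u ∈ Icc t0 t1,
      (∫ s in t0..t1, |deriv (fun v => Green t0 t1 v s) u|)
        = ((u - t0)^2 + (t1 - u)^2)/(2*(t1 - t0)) := by
    intro u hu
    rw [dgreen_abs_int ht hu, int_id_sub, int_const_sub]
    field_simp
    ring_nf
  have hG1B : BddAbove
      ((fun t => ∫ s in t0..t1, |deriv (fun u => Green t0 t1 u s) t|) '' Icc t0 t1) := by
    refine ⟨t1 - t0, ?_⟩
    rintro y ⟨u, hu, rfl⟩
    show (∫ s in t0..t1, |deriv (fun v => Green t0 t1 v s) u|) ≤ t1 - t0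
    rw [hQint u hu, div_le_iff₀ (by positivity)]
    nlinarith [hu.1, hu.2]
  have hG1ge : ∀ u ∈ Icc t0 t1, ((u - t0)^2 + (t1 - u)^2)/(2*(t1 - t0)) ≤ G1 := by
    intro u hu
    rw [hG1]
    exact le_csSup hG1B ⟨u, hu, hQint u hu⟩
  -- splitting of the weighted integrals of q
  have hsplit1 : ∀ t ∈ Icc t0 t1, ∫ s in t0..t, (s - t0) * q s
      = (∫ s in t0..t, (s - t0) * w s) + ∫ s in t0..t, (s - t0) * βE s := by
    intro t htm
    rw [← intervalIntegral.integral_add (q_ii_left ht hwc htm)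
      (q_ii_left ht hβEc.continuousOn htm)]
    apply intervalIntegral.integral_congr
    intro s hs
    show (s - t0) * q s = (s - t0) * w s + (s - t0) * βE s
    rw [hqw s]
    ring
  have hsplit2 : ∀ t ∈ Icc t0 t1, ∫ s in t..t1, (t1 - s) * q s
      = (∫ s in t..t1, (t1 - s) * w s) + ∫ s in t..t1, (t1 - s) * βE s := by
    intro t htm
    rw [← intervalIntegral.integral_add (q_ii_right ht hwc htm)
      (q_ii_right ht hβEc.continuousOn htm)]
    apply intervalIntegral.integral_congr
    intro s hs
    show (t1 - s) * q s = (t1 - s) * w s + (t1 - s) * βE s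
    rw [hqw s]
    ring
  -- the max-term of the invariant hypothesis
  have hinv' : max G0 G1 * X + max Sb Sb' ≤ R := by
    have : max G0 G1 * X = max G0 G1 * A * Real.exp (R / H) * (R + a) ^ 2 := by
      rw [hX]; ring
    rw [this]
    exact hinv
  have hmaxX0 : X * G0 ≤ max G0 G1 * X :=
    le_trans (mul_le_mul_of_nonneg_left (le_max_left G0 G1) hX0) (le_of_eq (mul_comm _ _))
  have hmaxX1 : X * G1 ≤ max G0 G1 * X :=
    le_trans (mul_le_mul_of_nonneg_left (le_max_right G0 G1) hX0) (le_of_eq (mul_comm _ _))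
  -- the a priori bounds
  have hZR : ∀ t ∈ Icc t0 t1, |(f t).1| ≤ R := by
    intro t htm
    have hval : (f t).1 = -(((t1 - t)/(t1 - t0)) * (∫ s in t0..t, (s - t0) * w s)
        + ((t - t0)/(t1 - t0)) * (∫ s in t..t1, (t1 - s) * w s)) + b t := by
      rw [green_repr ht hzd hpd hqc htm hf0 hf1, green_int ht hqc htm,
        hsplit1 t htm, hsplit2 t htm, hbeq t htm]
      unfold btil
      ring
    have e1 := wint_bound_left ht hwc hwb htm
    have e2 := wint_bound_right ht hwc hwb htm
    have hc1 : 0 ≤ (t1 - t)/(t1 - t0) := div_nonneg (by linarith [htm.2]) hd.le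
    have hc2 : 0 ≤ (t - t0)/(t1 - t0) := div_nonneg (by linarith [htm.1]) hd.le
    have key := comb_bound e1 e2 hc1 hc2
    have heq : (t1 - t)/(t1 - t0) * (X * (t - t0)^2/2)
        + (t - t0)/(t1 - t0) * (X * (t1 - t)^2/2) = X * ((t - t0) * (t1 - t)/2) := by
      field_simp
      ring
    rw [heq] at key
    have h7 : X * ((t - t0) * (t1 - t)/2) ≤ X * G0 :=
      mul_le_mul_of_nonneg_left (hG0ge t htm) hX0
    calc |(f t).1|
        ≤ |-(((t1 - t)/(t1 - t0)) * (∫ s in t0..t, (s - t0) * w s)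
            + ((t - t0)/(t1 - t0)) * (∫ s in t..t1, (t1 - s) * w s))| + |b t| := by
          rw [hval]; exact abs_add_le _ _
      _ ≤ X * G0 + Sb := add_le_add (le_trans key h7) (hble t htm)
      _ ≤ max G0 G1 * X + max Sb Sb' := add_le_add hmaxX0 (le_max_left _ _)
      _ ≤ R := hinv'
  have hPR : ∀ t ∈ Icc t0 t1, |(f t).2| ≤ R := by
    intro t htm
    have hval : (f t).2 = -((1/(t1 - t0)) * (-(∫ s in t0..t, (s - t0) * w s))
        + (1/(t1 - t0)) * (∫ s in t..t1, (t1 - s) * w s)) + b' t := by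
      rw [dgreen_repr ht hzd hpd hqc htm hf0 hf1, dgreen_int ht hqc htm,
        hsplit1 t htm, hsplit2 t htm, hb'eq t htm]
      ring
    have e1 := wint_bound_left ht hwc hwb htm
    have e1' : |-(∫ s in t0..t, (s - t0) * w s)| ≤ X * (t - t0)^2/2 := by
      rw [abs_neg]; exact e1
    have e2 := wint_bound_right ht hwc hwb htm
    have hc : 0 ≤ 1/(t1 - t0) := by positivity
    have key := comb_bound e1' e2 hc hc
    have heq : 1/(t1 - t0) * (X * (t - t0)^2/2) + 1/(t1 - t0) * (X * (t1 - t)^2/2)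
        = X * (((t - t0)^2 + (t1 - t)^2)/(2*(t1 - t0))) := by
      field_simp
    rw [heq] at key
    have h7 : X * (((t - t0)^2 + (t1 - t)^2)/(2*(t1 - t0))) ≤ X * G1 :=
      mul_le_mul_of_nonneg_left (hG1ge t htm) hX0
    calc |(f t).2|
        ≤ |-((1/(t1 - t0)) * (-(∫ s in t0..t, (s - t0) * w s))
            + (1/(t1 - t0)) * (∫ s in t..t1, (t1 - s) * w s))| + |b' t| := by
          rw [hval]; exact abs_add_le _ _
      _ ≤ X * G1 + Sb' := add_le_add (le_trans key h7) (hb'le t htm)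
      _ ≤ max G0 G1 * X + max Sb Sb' := add_le_add hmaxX1 (le_max_right _ _)
      _ ≤ R := hinv'
  -- the truncations are inactive, so q is the true nonlinearity
  have hqtrue : ∀ t ∈ Icc t0 t1,
      q t = α t * ((f t).2 + a)^2 * Real.exp (-((f t).1)/H) + β t := by
    intro t htm
    show gg R a H αE βE t ((f t).1) ((f t).2) = _
    unfold gg
    rw [tr_eq_of_abs_le (hZR t htm), tr_eq_of_abs_le (hPR t htm),
      hαEeq t htm, hβEeq t htm]
  -- assemble the solution
  refine ⟨fun u => (f u).1, fun u => (f u).2,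
    fun t => α t * ((f t).2 + a)^2 * Real.exp (-((f t).1)/H) + β t,
    hzd, ?_, ?_, fun t htm => rfl, hf0, hf1, fun t htm => ⟨hZR t htm, hPR t htm⟩⟩
  · intro t htm
    have := hpd t htm
    rwa [show gg R a H αE βE t ((f t).1) ((f t).2)
      = α t * ((f t).2 + a)^2 * Real.exp (-((f t).1)/H) + β t from hqtrue t htm] at this
  · have : ContinuousOn (fun t => α t * ((f t).2 + a)^2 * Real.exp (-((f t).1)/H) + β t)
        (Icc t0 t1) := by
      apply ContinuousOn.add ?_ hβ
      apply ContinuousOn.mul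
      · exact hα.mul ((hPc.add continuousOn_const).pow 2)
      · exact Real.continuous_exp.comp_continuousOn ((hZc.neg).div_const H)
    exact this
end

section
/- Let $t_0 < t_1$, let $\beta : [t_0,t_1] \to \mathbb{R}$ be continuous, and let $z : [t_0,t_1] \to \mathbb{R}$ be twice continuously differentiable with $z(t_0) = z(t_1) = 0$ and $\ddot z(t) \le \beta(t)$ for all $t \in [t_0,t_1]$. Then for every $t \in [t_0,t_1]$, $z(t) \ge -\int_{t_0}^{t_1} G(t,s)\beta(s)\, ds$, where $G(t,s) = \frac{(t - t_0)(t_1 - s)}{t_1 - t_0}$ if $t \le s$ and $G(t,s) = \frac{(s - t_0)(t_1 - t)}{t_1 - t_0}$ if $s \le t$. In particular, every solution $z$ of the boundary value problem $\ddot z = \alpha(t)(\dot z + a)^2 e^{-z/H} + \beta(t)$, $z(t_0) = z(t_1) = 0$, with continuous $\alpha \le 0$ and $H > 0$ satisfies this lower bound. -/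
open Set

open MeasureTheory intervalIntegral in
private lemma key_lower_bound (t0 t1 : ℝ) (ht : t0 < t1)
    (β : ℝ → ℝ) (hβ : ContinuousOn β (Icc t0 t1))
    (z z' z'' : ℝ → ℝ)
    (hz : ∀ t ∈ Icc t0 t1, HasDerivWithinAt z (z' t) (Icc t0 t1) t)
    (hz' : ∀ t ∈ Icc t0 t1, HasDerivWithinAt z' (z'' t) (Icc t0 t1) t)
    (hz'' : ContinuousOn z'' (Icc t0 t1))
    (h0 : z t0 = 0) (h1 : z t1 = 0)
    (hle : ∀ t ∈ Icc t0 t1, z'' t ≤ β t) :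
    ∀ t ∈ Icc t0 t1, z t ≥ -∫ s in t0..t1, Green t0 t1 t s * β s := by
  have hL : (0:ℝ) < t1 - t0 := sub_pos.2 ht
  have hLne : t1 - t0 ≠ 0 := ne_of_gt hL
  set L := t1 - t0 with hLdef
  have hg1 : ContinuousOn (fun s => (s - t0) * β s) (Icc t0 t1) :=
    ((continuous_id.sub continuous_const).continuousOn).mul hβ
  have hg2 : ContinuousOn (fun s => (t1 - s) * β s) (Icc t0 t1) :=
    ((continuous_const.sub continuous_id).continuousOn).mul hβ
  set B1 : ℝ → ℝ := fun t => ∫ s in t0..t, (s - t0) * β s with hB1def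
  set B2 : ℝ → ℝ := fun t => ∫ s in t..t1, (t1 - s) * β s with hB2def
  set F : ℝ → ℝ := fun t => (t1 - t)/L * B1 t + (t - t0)/L * B2 t with hFdef
  -- integrability on subintervals
  have hsub : ∀ t ∈ Icc t0 t1, uIcc t0 t ⊆ Icc t0 t1 := by
    intro t htm
    rw [uIcc_of_le htm.1]
    exact Icc_subset_Icc le_rfl htm.2
  have hsub' : ∀ t ∈ Icc t0 t1, uIcc t t1 ⊆ Icc t0 t1 := by
    intro t htm
    rw [uIcc_of_le htm.2]
    exact Icc_subset_Icc htm.1 le_rfl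
  have hg1int : ∀ t ∈ Icc t0 t1, IntervalIntegrable (fun s => (s - t0) * β s) volume t0 t :=
    fun t htm => (hg1.mono (hsub t htm)).intervalIntegrable
  have hg2int : ∀ t ∈ Icc t0 t1, IntervalIntegrable (fun s => (t1 - s) * β s) volume t t1 :=
    fun t htm => (hg2.mono (hsub' t htm)).intervalIntegrable
  -- the Green integral equals F t
  have hGF : ∀ t ∈ Icc t0 t1, (∫ s in t0..t1, Green t0 t1 t s * β s) = F t := by
    intro t htm
    have hGcont : Continuous (fun s => Green t0 t1 t s) := by
      apply Continuous.if_le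
      · exact (continuous_const.mul (continuous_const.sub continuous_id)).div_const _
      · exact ((continuous_id.sub continuous_const).mul continuous_const).div_const _
      · exact continuous_const
      · exact continuous_id
      · intro s hs
        subst hs
        ring
    have hGint1 : IntervalIntegrable (fun s => Green t0 t1 t s * β s) volume t0 t :=
      ((hGcont.continuousOn).mul (hβ.mono (hsub t htm))).intervalIntegrable
    have hGint2 : IntervalIntegrable (fun s => Green t0 t1 t s * β s) volume t t1 :=
      ((hGcont.continuousOn).mul (hβ.mono (hsub' t htm))).intervalIntegrable
    rw [← integral_add_adjacent_intervals hGint1 hGint2]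
    have e1 : (∫ s in t0..t, Green t0 t1 t s * β s)
        = ∫ s in t0..t, (t1 - t)/L * ((s - t0) * β s) := by
      apply integral_congr
      intro s hs
      rw [uIcc_of_le htm.1] at hs
      simp only [Green]
      split_ifs with h
      · have : s = t := le_antisymm hs.2 h
        subst this
        rw [hLdef]
        ring
      · rw [hLdef]
        ring
    have e2 : (∫ s in t..t1, Green t0 t1 t s * β s)
        = ∫ s in t..t1, (t - t0)/L * ((t1 - s) * β s) := by
      apply integral_congr
      intro s hs
      rw [uIcc_of_le htm.2] at hs
      simp only [Green]
      rw [if_pos hs.1]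
      rw [hLdef]
      ring
    rw [e1, e2, intervalIntegral.integral_const_mul, intervalIntegral.integral_const_mul]
  -- derivatives of B1, B2 at interior points
  have hB1d : ∀ x ∈ Ioo t0 t1, HasDerivAt B1 ((x - t0) * β x) x := by
    intro x hx
    exact integral_hasDerivAt_right (hg1int x (Ioo_subset_Icc_self hx))
      ((hg1.mono Ioo_subset_Icc_self).stronglyMeasurableAtFilter isOpen_Ioo x hx)
      (hg1.continuousAt (Icc_mem_nhds hx.1 hx.2))
  have hB2d : ∀ x ∈ Ioo t0 t1, HasDerivAt B2 (-((t1 - x) * β x)) x := by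
    intro x hx
    have hC : HasDerivAt (fun y => (∫ s in t0..t1, (t1 - s) * β s)
        - ∫ s in t0..y, (t1 - s) * β s) (-((t1 - x) * β x)) x := by
      have := (integral_hasDerivAt_right
        ((hg2.mono (by rw [uIcc_of_le ht.le])).intervalIntegrable.mono_set
          (by rw [uIcc_of_le ht.le, uIcc_of_le hx.1.le]; exact Icc_subset_Icc le_rfl hx.2.le))
        ((hg2.mono Ioo_subset_Icc_self).stronglyMeasurableAtFilter isOpen_Ioo x hx)
        (hg2.continuousAt (Icc_mem_nhds hx.1 hx.2)))
      exact ((hasDerivAt_const x _).sub this).congr_deriv (by ring)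
    apply hC.congr_of_eventuallyEq
    filter_upwards [Ioo_mem_nhds hx.1 hx.2] with y hy
    have h1 : IntervalIntegrable (fun s => (t1 - s) * β s) volume t0 y :=
      (hg2.mono (hsub y (Ioo_subset_Icc_self hy))).intervalIntegrable
    have h2 : IntervalIntegrable (fun s => (t1 - s) * β s) volume y t1 :=
      hg2int y (Ioo_subset_Icc_self hy)
    simp only [hB2def]
    rw [← integral_add_adjacent_intervals h1 h2]
    ring
  -- derivative of F
  have hFd : ∀ x ∈ Ioo t0 t1, HasDerivAt F ((B2 x - B1 x)/L) x := by
    intro x hx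
    have h1 : HasDerivAt (fun y => (t1 - y)/L * B1 y)
        ((-1)/L * B1 x + (t1 - x)/L * ((x - t0) * β x)) x := by
      exact (((hasDerivAt_const x t1).sub (hasDerivAt_id x)).div_const L).mul (hB1d x hx)
        |>.congr_deriv (by simp only [Pi.sub_apply, id_eq]; ring)
    have h2 : HasDerivAt (fun y => (y - t0)/L * B2 y)
        (1/L * B2 x + (x - t0)/L * (-((t1 - x) * β x))) x := by
      exact (((hasDerivAt_id x).sub (hasDerivAt_const x t0)).div_const L).mul (hB2d x hx)
        |>.congr_deriv (by simp only [Pi.sub_apply, id_eq]; ring)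
    have := h1.add h2
    exact this.congr_deriv (by ring)
  have hF'd : ∀ x ∈ Ioo t0 t1, HasDerivAt (fun y => (B2 y - B1 y)/L) (-(β x)) x := by
    intro x hx
    have := ((hB2d x hx).sub (hB1d x hx)).div_const L
    exact this.congr_deriv (by rw [hLdef, div_eq_iff (sub_ne_zero.mpr ht.ne')]; ring)
  -- continuity of F on Icc
  have hB1cont : ContinuousOn B1 (Icc t0 t1) := by
    have := continuousOn_primitive_interval (a := t0) (b := t1)
      (f := fun s => (s - t0) * β s) (μ := volume)
      (by rw [uIcc_of_le ht.le]; exact hg1.integrableOn_Icc)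
    rwa [uIcc_of_le ht.le] at this
  have hB2cont : ContinuousOn B2 (Icc t0 t1) := by
    have := continuousOn_primitive_interval_left (a := t0) (b := t1)
      (f := fun s => (t1 - s) * β s) (μ := volume)
      (by rw [uIcc_of_le ht.le]; exact hg2.integrableOn_Icc)
    rwa [uIcc_of_le ht.le] at this
  have hFcont : ContinuousOn F (Icc t0 t1) := by
    apply ContinuousOn.add
    · exact (((continuous_const.sub continuous_id).div_const L).continuousOn).mul hB1cont
    · exact (((continuous_id.sub continuous_const).div_const L).continuousOn).mul hB2cont
  have hzcont : ContinuousOn z (Icc t0 t1) :=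
    fun x hx => (hz x hx).continuousWithinAt
  -- concavity of w = z + F
  set w : ℝ → ℝ := fun t => z t + F t with hwdef
  have hconc : ConcaveOn ℝ (Icc t0 t1) w := by
    apply concaveOn_of_hasDerivWithinAt2_nonpos (convex_Icc t0 t1)
      (hzcont.add hFcont)
      (f' := fun x => z' x + (B2 x - B1 x)/L) (f'' := fun x => z'' x - β x)
    · intro x hx
      rw [interior_Icc] at hx ⊢
      exact ((hz x (Ioo_subset_Icc_self hx)).mono Ioo_subset_Icc_self).add
        ((hFd x hx).hasDerivWithinAt)
    · intro x hx
      rw [interior_Icc] at hx ⊢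
      have := ((hz' x (Ioo_subset_Icc_self hx)).mono Ioo_subset_Icc_self).add
        ((hF'd x hx).hasDerivWithinAt)
      exact this.congr_deriv (by ring)
    · intro x hx
      rw [interior_Icc] at hx
      have := hle x (Ioo_subset_Icc_self hx)
      linarith
  -- boundary values of w
  have hF0 : F t0 = 0 := by
    simp [hFdef, hB1def, hB2def]
  have hF1 : F t1 = 0 := by
    simp [hFdef, hB1def, hB2def]
  -- conclude
  intro t htm
  have key : 0 ≤ w t := by
    have ha : (0:ℝ) ≤ (t1 - t)/L := div_nonneg (by linarith [htm.2]) hL.le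
    have hb : (0:ℝ) ≤ (t - t0)/L := div_nonneg (by linarith [htm.1]) hL.le
    have hab : (t1 - t)/L + (t - t0)/L = 1 := by field_simp; rw [hLdef]; ring
    have := hconc.2 (left_mem_Icc.2 ht.le) (right_mem_Icc.2 ht.le) ha hb hab
    have heq : ((t1 - t)/L) • t0 + ((t - t0)/L) • t1 = t := by
      simp only [smul_eq_mul]
      field_simp
      ring
    rw [heq] at this
    have hw0 : w t0 = 0 := by simp [hwdef, h0, hF0]
    have hw1 : w t1 = 0 := by simp [hwdef, h1, hF1]
    rw [hw0, hw1] at this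
    simpa using this
  rw [ge_iff_le, hGF t htm, neg_le]
  simp only [hwdef] at key
  linarith

/-- Sign-sensitive a priori lower bound: every `C²` function with `z(t₀) = z(t₁) = 0`
and `z̈ ≤ β` on `[t₀, t₁]` satisfies `z(t) ≥ -∫_{t₀}^{t₁} G(t,s) β(s) ds`; in particular
every solution of the boundary value problem `z̈ = α(t)(ż + a)² e^{-z/H} + β(t)`,
`z(t₀) = z(t₁) = 0`, with continuous `α ≤ 0` and `H > 0` satisfies this lower bound. -/
theorem sign_sensitive_lower_bound (t0 t1 : ℝ) (ht : t0 < t1)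
    (β : ℝ → ℝ) (hβ : ContinuousOn β (Icc t0 t1)) :
    (∀ z z' z'' : ℝ → ℝ,
      (∀ t ∈ Icc t0 t1, HasDerivWithinAt z (z' t) (Icc t0 t1) t) →
      (∀ t ∈ Icc t0 t1, HasDerivWithinAt z' (z'' t) (Icc t0 t1) t) →
      ContinuousOn z'' (Icc t0 t1) →
      z t0 = 0 → z t1 = 0 →
      (∀ t ∈ Icc t0 t1, z'' t ≤ β t) →
      ∀ t ∈ Icc t0 t1, z t ≥ -∫ s in t0..t1, Green t0 t1 t s * β s) ∧
    (∀ (α : ℝ → ℝ), ContinuousOn α (Icc t0 t1) → (∀ t ∈ Icc t0 t1, α t ≤ 0) →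
      ∀ (a H : ℝ), 0 < H →
      ∀ z z' z'' : ℝ → ℝ,
      (∀ t ∈ Icc t0 t1, HasDerivWithinAt z (z' t) (Icc t0 t1) t) →
      (∀ t ∈ Icc t0 t1, HasDerivWithinAt z' (z'' t) (Icc t0 t1) t) →
      ContinuousOn z'' (Icc t0 t1) →
      (∀ t ∈ Icc t0 t1,
        z'' t = α t * (z' t + a) ^ 2 * Real.exp (-(z t) / H) + β t) →
      z t0 = 0 → z t1 = 0 →
      ∀ t ∈ Icc t0 t1, z t ≥ -∫ s in t0..t1, Green t0 t1 t s * β s) := by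
  constructor
  · intro z z' z'' hz hz' hz'' h0 h1 hle
    exact key_lower_bound t0 t1 ht β hβ z z' z'' hz hz' hz'' h0 h1 hle
  · intro α hα hα0 a H hH z z' z'' hz hz' hz'' heq h0 h1
    apply key_lower_bound t0 t1 ht β hβ z z' z'' hz hz' hz'' h0 h1
    intro t htm
    rw [heq t htm]
    have h2 : α t * (z' t + a) ^ 2 * Real.exp (-(z t) / H) ≤ 0 :=
      mul_nonpos_of_nonpos_of_nonneg
        (mul_nonpos_of_nonpos_of_nonneg (hα0 t htm) (sq_nonneg _))
        (Real.exp_nonneg _)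
    linarith
end
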